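/- arXiv:2405.07683 — 3 statements merged into one kernel-verified Lean document; each statement's English description precedes it below -/
import Mathlib

section
/- The set 𝐍 = {f''/f' : f univalent on Δ} is closed in the Banach space E₁ of holomorphic functions φ on Δ with norm ‖φ‖ = sup_{z∈Δ} |φ(z)|(1-|z|²) < ∞. That is, if fₙ are univalent functions on Δ with ‖N_{fₙ} - Φ‖_{E₁} → 0 for some Φ ∈ E₁, then there exists a univalent function f on Δ with N_f = Φ. -/
open Metric Set MeasureTheory intervalIntegral Filter
open scoped Topology

noncomputable def prim (g : ℂ → ℂ) (z : ℂ) : ℂ := ∫ t in (0:ℝ)..1, z * g ((t:ℂ) * z)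

lemma prim_zero (g : ℂ → ℂ) : prim g 0 = 0 := by simp [prim]

lemma mem_of_seg {z : ℂ} {t : ℝ} (ht : t ∈ Set.Icc (0:ℝ) 1) :
    ‖(t:ℂ) * z‖ ≤ ‖z‖ := by
  rw [norm_mul, Complex.norm_real]
  have : |t| ≤ 1 := abs_le.2 ⟨by linarith [ht.1], ht.2⟩
  calc |t| * ‖z‖ ≤ 1 * ‖z‖ := by
        exact mul_le_mul_of_nonneg_right this (norm_nonneg _)
    _ = ‖z‖ := one_mul _

lemma prim_contOn {g : ℂ → ℂ} (hg : ContinuousOn g (ball 0 1)) {z : ℂ} (hz : ‖z‖ < 1) :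
    ContinuousOn (fun t : ℝ => z * g ((t:ℂ) * z)) (Set.Icc 0 1) := by
  apply continuousOn_const.mul
  apply hg.comp (by fun_prop)
  intro t ht
  simpa [mem_ball_zero_iff] using lt_of_le_of_lt (mem_of_seg ht) hz

lemma prim_integrable {g : ℂ → ℂ} (hg : ContinuousOn g (ball 0 1)) {z : ℂ} (hz : ‖z‖ < 1) :
    IntervalIntegrable (fun t : ℝ => z * g ((t:ℂ) * z)) volume 0 1 :=
  ((prim_contOn hg hz).mono (by rw [uIcc_of_le zero_le_one])).intervalIntegrable

lemma prim_norm_le {g : ℂ → ℂ} {z : ℂ} {C : ℝ}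
    (hC : ∀ t ∈ Set.Icc (0:ℝ) 1, ‖g ((t:ℂ) * z)‖ ≤ C) : ‖prim g z‖ ≤ ‖z‖ * C := by
  have h := intervalIntegral.norm_integral_le_of_norm_le_const
    (C := ‖z‖ * C) (f := fun t : ℝ => z * g ((t:ℂ) * z)) (a := 0) (b := 1) ?_
  · unfold prim
    rw [show |(1:ℝ) - 0| = (1:ℝ) by norm_num, mul_one] at h
    exact h
  · intro t ht
    rw [Set.uIoc_of_le zero_le_one] at ht
    have ht' : t ∈ Set.Icc (0:ℝ) 1 := ⟨ht.1.le, ht.2⟩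
    rw [norm_mul]
    exact mul_le_mul_of_nonneg_left (hC t ht') (norm_nonneg _)

lemma prim_sub {g₁ g₂ : ℂ → ℂ} (h₁ : ContinuousOn g₁ (ball 0 1))
    (h₂ : ContinuousOn g₂ (ball 0 1)) {z : ℂ} (hz : ‖z‖ < 1) :
    prim g₁ z - prim g₂ z = prim (fun w => g₁ w - g₂ w) z := by
  unfold prim
  rw [← intervalIntegral.integral_sub (prim_integrable h₁ hz) (prim_integrable h₂ hz)]
  congr 1
  ext t
  ring




lemma prim_hasDerivAt {g : ℂ → ℂ} (hg : DifferentiableOn ℂ g (ball 0 1)) {z₀ : ℂ}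
    (hz : z₀ ∈ ball (0:ℂ) 1) : HasDerivAt (prim g) (g z₀) z₀ := by
  have hz' : ‖z₀‖ < 1 := mem_ball_zero_iff.mp hz
  set r : ℝ := (‖z₀‖ + 1) / 2 with hr_def
  have hr1 : r < 1 := by simp only [hr_def]; linarith
  have hzr : ‖z₀‖ < r := by simp only [hr_def]; linarith
  have hr0 : 0 < r := lt_of_le_of_lt (norm_nonneg _) hzr
  have hKsub : closedBall (0:ℂ) r ⊆ ball 0 1 := closedBall_subset_ball hr1
  have hgan : AnalyticOnNhd ℂ g (ball 0 1) := hg.analyticOnNhd isOpen_ball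
  have hg'c : ContinuousOn (deriv g) (ball 0 1) := hgan.deriv.continuousOn
  obtain ⟨C₁, hC₁⟩ := (isCompact_closedBall (0:ℂ) r).exists_bound_of_continuousOn
    (hg.continuousOn.mono hKsub)
  obtain ⟨C₂, hC₂⟩ := (isCompact_closedBall (0:ℂ) r).exists_bound_of_continuousOn
    (hg'c.mono hKsub)
  have hC₂0 : 0 ≤ C₂ := le_trans (norm_nonneg _) (hC₂ 0 (mem_closedBall_self hr0.le))
  set ε : ℝ := r - ‖z₀‖ with hε_def
  have hε : 0 < ε := by simp only [hε_def]; linarith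
  -- membership facts
  have hmem : ∀ x ∈ ball z₀ ε, ∀ t ∈ Set.Icc (0:ℝ) 1, (t:ℂ) * x ∈ closedBall (0:ℂ) r := by
    intro x hx t ht
    have hxr : ‖x‖ < r := by
      have := mem_ball_iff_norm.mp hx
      calc ‖x‖ = ‖z₀ + (x - z₀)‖ := by ring_nf
        _ ≤ ‖z₀‖ + ‖x - z₀‖ := norm_add_le _ _
        _ < ‖z₀‖ + ε := by linarith
        _ = r := by simp [hε_def]
    rw [mem_closedBall_zero_iff, norm_mul, Complex.norm_real]
    have h1 : |t| ≤ 1 := abs_le.2 ⟨by linarith [ht.1], ht.2⟩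
    calc |t| * ‖x‖ ≤ 1 * ‖x‖ := mul_le_mul_of_nonneg_right h1 (norm_nonneg _)
      _ ≤ r := by rw [one_mul]; exact hxr.le
  have hmem' : ∀ x ∈ ball z₀ ε, ∀ t ∈ Set.Icc (0:ℝ) 1, (t:ℂ) * x ∈ ball (0:ℂ) 1 :=
    fun x hx t ht => hKsub (hmem x hx t ht)
  have hz₀mem : z₀ ∈ ball z₀ ε := mem_ball_self hε
  -- continuity of integrands
  have hcont : ∀ x ∈ ball z₀ ε, ContinuousOn (fun t : ℝ => x * g ((t:ℂ) * x)) (Set.Icc 0 1) := by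
    intro x hx
    apply continuousOn_const.mul
    exact hg.continuousOn.comp (by fun_prop) (fun t ht => hmem' x hx t ht)
  -- the derivative integrand
  set F' : ℂ → ℝ → ℂ := fun x t => g ((t:ℂ) * x) + x * (deriv g ((t:ℂ) * x) * (t:ℂ)) with hF'_def
  have hcont' : ContinuousOn (F' z₀) (Set.Icc 0 1) := by
    apply ContinuousOn.add
    · exact hg.continuousOn.comp (by fun_prop) (fun t ht => hmem' z₀ hz₀mem t ht)
    · apply continuousOn_const.mul
      apply ContinuousOn.mul _ (Complex.continuous_ofReal.continuousOn)
      exact hg'c.comp (by fun_prop) (fun t ht => hmem' z₀ hz₀mem t ht)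
  have key := intervalIntegral.hasDerivAt_integral_of_dominated_loc_of_deriv_le
    (F := fun (x : ℂ) (t : ℝ) => x * g ((t:ℂ) * x)) (F' := F') (x₀ := z₀)
    (a := 0) (b := 1) (μ := volume) (bound := fun _ => C₁ + r * C₂) (ball_mem_nhds z₀ hε) ?_ ?_ ?_ ?_ ?_ ?_
  · -- now compute the value of the integral
    have hup : (∫ t in (0:ℝ)..1, F' z₀ t) = g z₀ := by
      have hftc : ∀ t ∈ Set.uIcc (0:ℝ) 1,
          HasDerivAt (fun s : ℝ => (s:ℂ) * g ((s:ℂ) * z₀)) (F' z₀ t) t := by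
        intro t ht
        rw [Set.uIcc_of_le zero_le_one] at ht
        have hin : (t:ℂ) * z₀ ∈ ball (0:ℂ) 1 := hmem' z₀ hz₀mem t ht
        have hgd : HasDerivAt g (deriv g ((t:ℂ) * z₀)) ((t:ℂ) * z₀) :=
          (hg.differentiableAt (isOpen_ball.mem_nhds hin)).hasDerivAt
        -- complexified map
        have hE : HasDerivAt (fun w : ℂ => w * g (w * z₀))
            (g ((t:ℂ) * z₀) + (t:ℂ) * (deriv g ((t:ℂ) * z₀) * z₀)) (t:ℂ) := by
          have hinner : HasDerivAt (fun w : ℂ => w * z₀) z₀ (t:ℂ) := by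
            simpa using (hasDerivAt_id ((t:ℂ))).mul_const z₀
          have hcomp : HasDerivAt (fun w : ℂ => g (w * z₀))
              (deriv g ((t:ℂ) * z₀) * z₀) (t:ℂ) := hgd.comp (t:ℂ) hinner
          simpa [Pi.mul_def] using (hasDerivAt_id ((t:ℂ))).mul hcomp
        have := hE.comp_ofReal
        have heq : F' z₀ t = g ((t:ℂ) * z₀) + (t:ℂ) * (deriv g ((t:ℂ) * z₀) * z₀) := by
          simp only [hF'_def]; ring
        rw [heq]
        exact this
      have hint : IntervalIntegrable (F' z₀) volume 0 1 :=
        (hcont'.mono (by rw [Set.uIcc_of_le zero_le_one])).intervalIntegrable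
      have := intervalIntegral.integral_eq_sub_of_hasDerivAt hftc hint
      simpa using this
    rw [hup] at key
    exact key.2
  · -- hF_meas
    filter_upwards [isOpen_ball.mem_nhds hz₀mem] with x hx
    apply ContinuousOn.aestronglyMeasurable _ measurableSet_uIoc
    exact (hcont x hx).mono (by rw [Set.uIoc_of_le zero_le_one]; exact Set.Ioc_subset_Icc_self)
  · exact ((hcont z₀ hz₀mem).mono (by rw [Set.uIcc_of_le zero_le_one])).intervalIntegrable
  · apply ContinuousOn.aestronglyMeasurable _ measurableSet_uIoc
    exact hcont'.mono (by rw [Set.uIoc_of_le zero_le_one]; exact Set.Ioc_subset_Icc_self)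
  · -- h_bound
    apply ae_of_all
    intro t ht x hx
    rw [Set.uIoc_of_le zero_le_one] at ht
    have ht' : t ∈ Set.Icc (0:ℝ) 1 := ⟨ht.1.le, ht.2⟩
    have hK := hmem x hx t ht'
    have hxr : ‖x‖ ≤ r := by
      have := mem_closedBall_zero_iff.mp (hmem x hx 1 (by norm_num))
      simpa using this
    have h1 : |t| ≤ 1 := abs_le.2 ⟨by linarith [ht'.1], ht'.2⟩
    calc ‖F' x t‖ ≤ ‖g ((t:ℂ) * x)‖ + ‖x * (deriv g ((t:ℂ) * x) * (t:ℂ))‖ := norm_add_le _ _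
      _ ≤ C₁ + r * C₂ := by
          gcongr
          · exact hC₁ _ hK
          · rw [norm_mul, norm_mul, Complex.norm_real]
            calc ‖x‖ * (‖deriv g ((t:ℂ) * x)‖ * |t|) ≤ r * (C₂ * 1) := by
                  gcongr
                  exact hC₂ _ hK
              _ = r * C₂ := by ring
  · exact intervalIntegrable_const
  · -- h_diff
    apply ae_of_all
    intro t ht x hx
    rw [Set.uIoc_of_le zero_le_one] at ht
    have ht' : t ∈ Set.Icc (0:ℝ) 1 := ⟨ht.1.le, ht.2⟩
    have hin : (t:ℂ) * x ∈ ball (0:ℂ) 1 := hmem' x hx t ht'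
    have hgd : HasDerivAt g (deriv g ((t:ℂ) * x)) ((t:ℂ) * x) :=
      (hg.differentiableAt (isOpen_ball.mem_nhds hin)).hasDerivAt
    have hinner : HasDerivAt (fun y : ℂ => (t:ℂ) * y) (t:ℂ) x := by
      simpa using (hasDerivAt_id x).const_mul (t:ℂ)
    have hcomp : HasDerivAt (fun y : ℂ => g ((t:ℂ) * y)) (deriv g ((t:ℂ) * x) * (t:ℂ)) x :=
      hgd.comp _ hinner
    simpa [hF'_def, Pi.mul_def] using (hasDerivAt_id x).mul hcomp



lemma eq_of_hasDerivAt_zero {s : Set ℂ} (hs : Convex ℝ s) (ho : IsOpen s) {q : ℂ → ℂ}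
    (hq : ∀ z ∈ s, HasDerivAt q 0 z) {x y : ℂ} (hx : x ∈ s) (hy : y ∈ s) : q x = q y := by
  apply hs.is_const_of_fderivWithin_eq_zero
    (fun z hz => ((hq z hz).differentiableAt).differentiableWithinAt) _ hx hy
  intro z hz
  rw [fderivWithin_of_isOpen ho hz]
  have h := (hq z hz).hasFDerivAt.fderiv
  rw [h]
  ext1
  simp

lemma exists_zero_of_min_mod {f : ℂ → ℂ} {c : ℂ} {r δ : ℝ} (hr : 0 < r)
    (hd : DifferentiableOn ℂ f (closedBall c r))
    (hδ : ∀ z ∈ sphere c r, δ ≤ ‖f z‖) (hc : ‖f c‖ < δ) :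
    ∃ z ∈ closedBall c r, f z = 0 := by
  by_contra hcon
  push_neg at hcon
  have hδ0 : 0 < δ := lt_of_le_of_lt (norm_nonneg _) hc
  have hcl : closure (ball c r) = closedBall c r := closure_ball c hr.ne'
  have hdc : DiffContOnCl ℂ (fun z => (f z)⁻¹) (ball c r) := by
    constructor
    · exact ((hd.mono ball_subset_closedBall).inv
        (fun z hz => hcon z (ball_subset_closedBall hz)))
    · rw [hcl]
      exact hd.continuousOn.inv₀ hcon
  have hb : Bornology.IsBounded (ball c r) := isBounded_ball
  have hfr : ∀ z ∈ frontier (ball c r), ‖(f z)⁻¹‖ ≤ δ⁻¹ := by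
    intro z hz
    rw [frontier_ball c hr.ne'] at hz
    rw [norm_inv]
    exact inv_anti₀ hδ0 (hδ z hz)
  have hmem : c ∈ closure (ball c r) := by
    rw [hcl]; exact mem_closedBall_self hr.le
  have := Complex.norm_le_of_forall_mem_frontier_norm_le hb hdc hfr hmem
  rw [norm_inv] at this
  have hfc : 0 < ‖f c‖ := norm_pos_iff.mpr (hcon c (mem_closedBall_self hr.le))
  have : δ ≤ ‖f c‖ := by
    have h2 : δ ≤ ‖f c‖ := by
      by_contra hlt
      push_neg at hlt
      have := inv_strictAnti₀ hfc hlt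
      linarith
    exact h2
  linarith



lemma deriv_ne_zero_of_bound {f Φ : ℂ → ℂ}
    (hd : DifferentiableOn ℂ f (ball 0 1)) (hinj : Set.InjOn f (ball 0 1))
    (hΦc : ContinuousOn Φ (ball 0 1))
    (hb : ∀ z ∈ ball (0:ℂ) 1, ‖deriv (deriv f) z / deriv f z - Φ z‖ * (1 - ‖z‖^2) ≤ 1)
    {z₀ : ℂ} (h₀ : z₀ ∈ ball (0:ℂ) 1) : deriv f z₀ ≠ 0 := by
  intro hzero
  have hfan : AnalyticOnNhd ℂ f (ball 0 1) := hd.analyticOnNhd isOpen_ball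
  have hf'an : AnalyticOnNhd ℂ (deriv f) (ball 0 1) := hfan.deriv
  have hA : AnalyticAt ℂ (deriv f) z₀ := hf'an z₀ h₀
  have htop : analyticOrderAt (deriv f) z₀ ≠ ⊤ := by
    intro htop
    rw [analyticOrderAt_eq_top] at htop
    have hzero_ball : EqOn (deriv f) (fun _ => (0:ℂ)) (ball 0 1) :=
      hf'an.eqOn_of_preconnected_of_eventuallyEq analyticOnNhd_const
        (convex_ball (0:ℂ) 1).isPreconnected h₀ htop
    have hmem0 : (0:ℂ) ∈ ball (0:ℂ) 1 := mem_ball_self one_pos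
    have hmemhalf : (1/2 : ℂ) ∈ ball (0:ℂ) 1 := by
      rw [mem_ball_zero_iff]
      simp only [norm_div, norm_one]
      norm_num
    have hconst : f (1/2 : ℂ) = f 0 := by
      apply eq_of_hasDerivAt_zero (convex_ball (0:ℂ) 1) isOpen_ball _ hmemhalf hmem0
      intro w hw
      have := (hd.differentiableAt (isOpen_ball.mem_nhds hw)).hasDerivAt
      rwa [hzero_ball hw] at this
    have := hinj hmemhalf hmem0 hconst
    norm_num at this
  obtain ⟨m, hm⟩ := ENat.ne_top_iff_exists.mp htop
  obtain ⟨u, huan, hune, huev⟩ := (hA.analyticOrderAt_eq_natCast (n := m)).mp hm.symm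
  have hm0 : m ≠ 0 := by
    intro h0'
    subst h0'
    have := huev.self_of_nhds
    simp only [pow_zero, one_smul] at this
    exact hune (this ▸ hzero)
  obtain ⟨k, rfl⟩ : ∃ k, m = k + 1 :=
    ⟨m - 1, (Nat.succ_pred_eq_of_pos (Nat.pos_of_ne_zero hm0)).symm⟩
  -- continuity of deriv u at z₀
  obtain ⟨s, hs_mem, hs_an⟩ := huan.eventually_analyticAt.exists_mem
  have hdu_an : AnalyticAt ℂ (deriv u) z₀ := (AnalyticOnNhd.deriv hs_an) z₀
    (mem_of_mem_nhds hs_mem)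
  have hdu_cont : ContinuousAt (deriv u) z₀ := hdu_an.continuousAt
  have hu_cont : ContinuousAt u z₀ := huan.continuousAt
  -- local form of deriv f
  have hloc : deriv f =ᶠ[𝓝 z₀] (fun z => (z - z₀)^(k+1) * u z) :=
    huev.mono (fun z hz => by simpa [smul_eq_mul] using hz)
  have hev2 : ∀ᶠ z in 𝓝 z₀, deriv (deriv f) z
      = (↑(k+1) : ℂ) * (z - z₀)^k * u z + (z - z₀)^(k+1) * deriv u z := by
    filter_upwards [hloc.deriv, huan.eventually_analyticAt] with z hz hz_u
    rw [hz]
    have h1 : HasDerivAt (fun w : ℂ => (w - z₀)^(k+1)) ((↑(k+1) : ℂ) * (z - z₀)^k) z := by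
      have := (hasDerivAt_pow (k+1) (z - z₀)).comp z ((hasDerivAt_id z).sub_const z₀)
      simpa [Function.comp_def] using this
    have h2 : HasDerivAt u (deriv u z) z := hz_u.differentiableAt.hasDerivAt
    exact (h1.mul h2).deriv
  -- constants
  set B : ℝ := ‖deriv u z₀ / u z₀‖ + 1 with hB_def
  have hBpos : 0 < B := by positivity
  have hBev : ∀ᶠ z in 𝓝 z₀, ‖deriv u z / u z‖ ≤ B := by
    have hcont : ContinuousAt (fun z => ‖deriv u z / u z‖) z₀ :=
      (hdu_cont.div hu_cont hune).norm
    have := hcont.tendsto.eventually_lt_const (by simp only [hB_def]; linarith : ‖deriv u z₀ / u z₀‖ < B)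
    exact this.mono (fun z hz => hz.le)
  set P : ℝ := ‖Φ z₀‖ + 1 with hP_def
  have hPev : ∀ᶠ z in 𝓝 z₀, ‖Φ z‖ ≤ P := by
    have hcont : ContinuousAt (fun z => ‖Φ z‖) z₀ :=
      ((hΦc.continuousAt (isOpen_ball.mem_nhds h₀))).norm
    exact (hcont.tendsto.eventually_lt_const
      (by simp only [hP_def]; linarith : ‖Φ z₀‖ < P)).mono (fun z hz => hz.le)
  set c : ℝ := 1 - ‖z₀‖^2 with hc_def
  have hcpos : 0 < c := by
    have : ‖z₀‖ < 1 := mem_ball_zero_iff.mp h₀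
    have h2 : ‖z₀‖^2 < 1 := by nlinarith [norm_nonneg z₀]
    simp only [hc_def]; linarith
  have hQev : ∀ᶠ z in 𝓝 z₀, c/2 ≤ 1 - ‖z‖^2 := by
    have hcont : ContinuousAt (fun z : ℂ => 1 - ‖z‖^2) z₀ := by fun_prop
    have := hcont.tendsto.eventually_const_lt (by simp only [hc_def]; linarith : c/2 < 1 - ‖z₀‖^2)
    exact this.mono (fun z hz => hz.le)
  set T : ℝ := B + P + 2/c + 1 with hT_def
  have hTpos : 0 < T := by positivity
  have hsmall : ∀ᶠ z in 𝓝 z₀, dist z z₀ < 1/T := by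
    filter_upwards [Metric.ball_mem_nhds z₀ (by positivity : (0:ℝ) < 1/T)] with z hz
    exact mem_ball.mp hz
  have hune' : ∀ᶠ z in 𝓝 z₀, u z ≠ 0 := hu_cont.eventually_ne hune
  have hball : ∀ᶠ z in 𝓝 z₀, z ∈ ball (0:ℂ) 1 := isOpen_ball.mem_nhds h₀
  have hfalse : ∀ᶠ z in 𝓝[≠] z₀, False := by
    filter_upwards [hloc.filter_mono nhdsWithin_le_nhds, hev2.filter_mono nhdsWithin_le_nhds,
      hBev.filter_mono nhdsWithin_le_nhds, hPev.filter_mono nhdsWithin_le_nhds,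
      hQev.filter_mono nhdsWithin_le_nhds, hsmall.filter_mono nhdsWithin_le_nhds,
      hune'.filter_mono nhdsWithin_le_nhds, hball.filter_mono nhdsWithin_le_nhds,
      self_mem_nhdsWithin] with z h1 h2 h3 h4 h5 h6 h7 h8 h9
    have hzne : z ≠ z₀ := h9
    have hsub : z - z₀ ≠ 0 := sub_ne_zero.mpr hzne
    have hN : deriv (deriv f) z / deriv f z = (↑(k+1) : ℂ)/(z - z₀) + deriv u z / u z := by
      rw [h1, h2]
      field_simp
      ring
    -- bounds
    have hbz := hb z h8
    have h1z : (0:ℝ) < 1 - ‖z‖^2 := lt_of_lt_of_le (by positivity) h5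
    have hup : ‖deriv (deriv f) z / deriv f z - Φ z‖ ≤ 2/c := by
      have h2c : 1/(1 - ‖z‖^2) ≤ 2/c := by
        rw [div_le_div_iff₀ h1z hcpos]
        linarith
      have : ‖deriv (deriv f) z / deriv f z - Φ z‖ ≤ 1/(1 - ‖z‖^2) := by
        rw [le_div_iff₀ h1z]
        exact hbz
      linarith
    have hNup : ‖deriv (deriv f) z / deriv f z‖ ≤ P + 2/c := by
      have := norm_sub_norm_le (deriv (deriv f) z / deriv f z) (Φ z)
      linarith
    -- lower bound
    have hdpos : 0 < ‖z - z₀‖ := norm_pos_iff.mpr hsub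
    have hNlow : 1/‖z - z₀‖ - B ≤ ‖deriv (deriv f) z / deriv f z‖ := by
      have ht : ‖(↑(k+1) : ℂ)/(z - z₀)‖
          ≤ ‖deriv (deriv f) z / deriv f z‖ + ‖deriv u z / u z‖ := by
        calc ‖(↑(k+1) : ℂ)/(z - z₀)‖
            = ‖(deriv (deriv f) z / deriv f z) - deriv u z / u z‖ := by rw [hN]; ring_nf
          _ ≤ ‖deriv (deriv f) z / deriv f z‖ + ‖deriv u z / u z‖ := norm_sub_le _ _
      have hq : 1/‖z - z₀‖ ≤ ‖(↑(k+1) : ℂ)/(z - z₀)‖ := by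
        rw [norm_div]
        gcongr
        rw [show ((↑(k+1) : ℂ)) = ((k+1 : ℕ) : ℂ) by push_cast; ring, Complex.norm_natCast]
        exact_mod_cast Nat.one_le_iff_ne_zero.mpr (Nat.succ_ne_zero k)
      linarith
    -- contradiction
    have hd1 : 1/‖z - z₀‖ ≤ B + P + 2/c := by linarith
    have hd2 : T < 1/‖z - z₀‖ := by
      rw [lt_div_iff₀ hdpos]
      have : ‖z - z₀‖ < 1/T := by rwa [dist_eq_norm] at h6
      calc T * ‖z - z₀‖ < T * (1/T) := by
            exact mul_lt_mul_of_pos_left this hTpos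
        _ = 1 := by field_simp
    simp only [hT_def] at hd2
    linarith
  obtain ⟨_, h⟩ := hfalse.exists
  exact h




lemma injOn_limit (F : ℂ → ℂ) (hFd : DifferentiableOn ℂ F (ball 0 1))
    (hF'ne : ∀ z ∈ ball (0:ℂ) 1, deriv F z ≠ 0)
    (approx : ∀ ε > (0:ℝ), ∀ ρ : ℝ, ρ < 1 → ∃ g : ℂ → ℂ, DifferentiableOn ℂ g (ball 0 1) ∧
      Set.InjOn g (ball 0 1) ∧ ∀ z : ℂ, ‖z‖ ≤ ρ → ‖g z - F z‖ ≤ ε) :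
    Set.InjOn F (ball 0 1) := by
  intro a ha b hb hab
  by_contra hne
  have ha' : ‖a‖ < 1 := mem_ball_zero_iff.mp ha
  have hb' : ‖b‖ < 1 := mem_ball_zero_iff.mp hb
  -- isolated point property at b
  have hFan : AnalyticAt ℂ (fun z => F z - F b) b :=
    ((hFd.analyticOnNhd isOpen_ball) b hb).sub analyticAt_const
  have hnotev : ¬ (∀ᶠ z in 𝓝 b, F z - F b = 0) := by
    intro hev
    have heq : F =ᶠ[𝓝 b] (fun _ => F b) := hev.mono (fun z hz => by linear_combination hz)
    have := heq.deriv_eq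
    rw [deriv_const] at this
    exact hF'ne b hb this
  have hiso : ∀ᶠ z in 𝓝[≠] b, F z - F b ≠ 0 :=
    hFan.eventually_eq_zero_or_eventually_ne_zero.resolve_left hnotev
  rw [eventually_nhdsWithin_iff] at hiso
  rw [Metric.eventually_nhds_iff] at hiso
  obtain ⟨t, ht0, ht⟩ := hiso
  -- choose radius r
  have hdab : 0 < dist a b := dist_pos.mpr hne
  set r : ℝ := min (t/2) (min (dist a b / 2) ((1 - ‖b‖)/2)) with hr_def
  have hr0 : 0 < r := by
    simp only [hr_def, lt_min_iff]
    refine ⟨by linarith, by linarith, by linarith⟩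
  have hrt : r < t := by
    simp only [hr_def]
    calc min (t/2) _ ≤ t/2 := min_le_left _ _
      _ < t := by linarith
  have hrab : r < dist a b := by
    have : r ≤ dist a b / 2 := le_trans (min_le_right _ _) (min_le_left _ _)
    linarith
  have hrb : ‖b‖ + r ≤ (1 + ‖b‖)/2 := by
    have : r ≤ (1 - ‖b‖)/2 := le_trans (min_le_right _ _) (min_le_right _ _)
    linarith
  have hrb1 : ‖b‖ + r < 1 := by linarith
  have hsub : closedBall b r ⊆ ball (0:ℂ) 1 := by
    intro z hz
    rw [mem_closedBall, dist_eq_norm] at hz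
    rw [mem_ball_zero_iff]
    calc ‖z‖ = ‖b + (z - b)‖ := by ring_nf
      _ ≤ ‖b‖ + ‖z - b‖ := norm_add_le _ _
      _ ≤ ‖b‖ + r := by linarith
      _ < 1 := hrb1
  have hanb : a ∉ closedBall b r := by
    intro hmem
    rw [mem_closedBall] at hmem
    linarith
  have hne_on : ∀ z ∈ closedBall b r, z ≠ b → F z ≠ F b := by
    intro z hz hzb
    rw [mem_closedBall] at hz
    have := ht (lt_of_le_of_lt hz hrt) hzb
    intro h
    exact this (by rw [h, sub_self])
  -- minimum on sphere
  have hsph_sub : sphere b r ⊆ ball (0:ℂ) 1 := sphere_subset_closedBall.trans hsub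
  have hFcont : ContinuousOn (fun z => ‖F z - F b‖) (sphere b r) :=
    ((hFd.continuousOn.mono hsph_sub).sub continuousOn_const).norm
  obtain ⟨zm, hzm_mem, hzm⟩ := (isCompact_sphere b r).exists_isMinOn
    (NormedSpace.sphere_nonempty.mpr hr0.le) hFcont
  set δ : ℝ := ‖F zm - F b‖ with hδ_def
  have hδpos : 0 < δ := by
    have hzm_ne : zm ≠ b := by
      intro h
      have := mem_sphere_iff_norm.mp hzm_mem
      rw [h] at this
      simp at this
      linarith
    have := hne_on zm (sphere_subset_closedBall hzm_mem) hzm_ne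
    simpa [hδ_def, sub_eq_zero, norm_pos_iff] using this
  have hδmin : ∀ z ∈ sphere b r, δ ≤ ‖F z - F b‖ := fun z hz => hzm hz
  -- choose approximant
  set ρ : ℝ := max (‖b‖ + r) ‖a‖ with hρ_def
  have hρ1 : ρ < 1 := by
    simp only [hρ_def, max_lt_iff]
    exact ⟨hrb1, ha'⟩
  obtain ⟨g, hgd, hginj, hgapp⟩ := approx (δ/5) (by positivity) ρ hρ1
  have hmemρ : ∀ z ∈ closedBall b r, ‖z‖ ≤ ρ := by
    intro z hz
    rw [mem_closedBall, dist_eq_norm] at hz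
    calc ‖z‖ = ‖b + (z - b)‖ := by ring_nf
      _ ≤ ‖b‖ + ‖z - b‖ := norm_add_le _ _
      _ ≤ ‖b‖ + r := by linarith
      _ ≤ ρ := le_max_left _ _
  have haρ : ‖a‖ ≤ ρ := le_max_right _ _
  -- apply minimum modulus to g - g a on closedBall b r
  have hkey := exists_zero_of_min_mod (f := fun z => g z - g a) (c := b) (r := r)
    (δ := 3*δ/5) hr0 ?_ ?_ ?_
  · obtain ⟨z₁, hz₁_mem, hz₁⟩ := hkey
    have hz₁b : z₁ ∈ ball (0:ℂ) 1 := hsub hz₁_mem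
    have : z₁ = a := hginj hz₁b ha (by linear_combination hz₁)
    exact hanb (this ▸ hz₁_mem)
  · exact (hgd.mono hsub).sub (differentiableOn_const _)
  · -- sphere lower bound
    intro z hz
    have hzcb : z ∈ closedBall b r := sphere_subset_closedBall hz
    have h1 := hgapp z (hmemρ z hzcb)
    have h2 := hgapp a haρ
    have h3 := hδmin z hz
    have hdecomp : g z - g a = (F z - F b) + ((g z - F z) - (g a - F a)) := by
      rw [hab]; ring
    calc 3*δ/5 = δ - δ/5 - δ/5 := by ring
      _ ≤ ‖F z - F b‖ - ‖g z - F z‖ - ‖g a - F a‖ := by linarith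
      _ ≤ ‖g z - g a‖ := by
          have htri : ‖F z - F b‖ ≤ ‖g z - g a‖ + ‖g z - F z‖ + ‖g a - F a‖ := by
            calc ‖F z - F b‖ = ‖(g z - g a) - ((g z - F z) - (g a - F a))‖ := by
                  rw [hab]; ring_nf
              _ ≤ ‖g z - g a‖ + ‖(g z - F z) - (g a - F a)‖ := norm_sub_le _ _
              _ ≤ ‖g z - g a‖ + (‖g z - F z‖ + ‖g a - F a‖) := by
                  have := norm_sub_le (g z - F z) (g a - F a)
                  linarith
              _ = ‖g z - g a‖ + ‖g z - F z‖ + ‖g a - F a‖ := by ring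
          linarith
  · -- center bound
    have h1 := hgapp b (hmemρ b (mem_closedBall_self hr0.le))
    have h2 := hgapp a haρ
    calc ‖g b - g a‖ = ‖(g b - F b) - (g a - F a)‖ := by rw [hab]; ring_nf
      _ ≤ ‖g b - F b‖ + ‖g a - F a‖ := norm_sub_le _ _
      _ ≤ δ/5 + δ/5 := by linarith
      _ < 3*δ/5 := by linarith

lemma struct_lemma {Φ : ℂ → ℂ} (hΦc : ContinuousOn Φ (ball 0 1)) {fn : ℂ → ℂ}
    (hd : DifferentiableOn ℂ fn (ball 0 1)) (hinjf : Set.InjOn fn (ball 0 1))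
    (hb1 : ∀ z ∈ ball (0:ℂ) 1, ‖deriv (deriv fn) z / deriv fn z - Φ z‖ * (1 - ‖z‖^2) ≤ 1) :
    Set.InjOn (fun z => (fn z - fn 0) * (deriv fn 0)⁻¹) (ball 0 1) ∧
    DifferentiableOn ℂ (fun z => (fn z - fn 0) * (deriv fn 0)⁻¹) (ball 0 1) ∧
    DifferentiableOn ℂ (fun z => deriv (deriv fn) z / deriv fn z) (ball 0 1) ∧
    ∀ z ∈ ball (0:ℂ) 1, (fn z - fn 0) * (deriv fn 0)⁻¹ =
      prim (fun w => Complex.exp (prim (fun w' => deriv (deriv fn) w' / deriv fn w') w)) z := by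
  have h01 : (0:ℂ) ∈ ball (0:ℂ) 1 := mem_ball_self one_pos
  have hf'ne : ∀ z ∈ ball (0:ℂ) 1, deriv fn z ≠ 0 :=
    fun z hz => deriv_ne_zero_of_bound hd hinjf hΦc hb1 hz
  have hd_ne : deriv fn 0 ≠ 0 := hf'ne 0 h01
  have hf'd : DifferentiableOn ℂ (deriv fn) (ball 0 1) :=
    ((hd.analyticOnNhd isOpen_ball).deriv).differentiableOn
  have hf''d : DifferentiableOn ℂ (deriv (deriv fn)) (ball 0 1) :=
    ((hd.analyticOnNhd isOpen_ball).deriv.deriv).differentiableOn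
  set Nf : ℂ → ℂ := fun z => deriv (deriv fn) z / deriv fn z with hNf_def
  have hNd : DifferentiableOn ℂ Nf (ball 0 1) := hf''d.div hf'd hf'ne
  have hHn : ∀ z ∈ ball (0:ℂ) 1, HasDerivAt (prim Nf) (Nf z) z :=
    fun z hz => prim_hasDerivAt hNd hz
  have hHd : DifferentiableOn ℂ (prim Nf) (ball 0 1) :=
    fun z hz => ((hHn z hz).differentiableAt).differentiableWithinAt
  -- injectivity of normalized function
  have hinj_g : Set.InjOn (fun z => (fn z - fn 0) * (deriv fn 0)⁻¹) (ball 0 1) := by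
    intro x hx y hy hxy
    simp only at hxy
    have h1 : fn x - fn 0 = fn y - fn 0 :=
      mul_right_cancel₀ (inv_ne_zero hd_ne) hxy
    exact hinjf hx hy (by linear_combination h1)
  have hdiff_g : DifferentiableOn ℂ (fun z => (fn z - fn 0) * (deriv fn 0)⁻¹) (ball 0 1) :=
    (hd.sub (differentiableOn_const _)).mul_const _
  refine ⟨hinj_g, hdiff_g, hNd, ?_⟩
  -- q = deriv fn * exp (- prim Nf) is constant
  have hq0 : ∀ z ∈ ball (0:ℂ) 1,
      HasDerivAt (fun z => deriv fn z * Complex.exp (-(prim Nf z))) 0 z := by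
    intro z hz
    have d1 : HasDerivAt (deriv fn) (deriv (deriv fn) z) z :=
      (hf'd.differentiableAt (isOpen_ball.mem_nhds hz)).hasDerivAt
    have d2 : HasDerivAt (fun z => Complex.exp (-(prim Nf z)))
        (Complex.exp (-(prim Nf z)) * (-(Nf z))) z :=
      (Complex.hasDerivAt_exp (-(prim Nf z))).comp z ((hHn z hz).neg)
    have prod := d1.mul d2
    have hval : deriv (deriv fn) z * Complex.exp (-(prim Nf z))
        + deriv fn z * (Complex.exp (-(prim Nf z)) * (-(Nf z))) = 0 := by
      simp only [hNf_def]
      field_simp [hf'ne z hz]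
      ring
    rw [← hval]
    exact prod
  have hqconst : ∀ z ∈ ball (0:ℂ) 1,
      deriv fn z * Complex.exp (-(prim Nf z)) = deriv fn 0 := by
    intro z hz
    have := eq_of_hasDerivAt_zero (convex_ball (0:ℂ) 1) isOpen_ball hq0 hz h01
    rwa [prim_zero, neg_zero, Complex.exp_zero, mul_one] at this
  have hf'_formula : ∀ z ∈ ball (0:ℂ) 1,
      deriv fn z = deriv fn 0 * Complex.exp (prim Nf z) := by
    intro z hz
    have h := hqconst z hz
    rw [Complex.exp_neg] at h
    field_simp at h
    linear_combination h
  -- exp (prim Nf) is differentiable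
  have hexpd : DifferentiableOn ℂ (fun w => Complex.exp (prim Nf w)) (ball 0 1) := hHd.cexp
  have hGn : ∀ z ∈ ball (0:ℂ) 1,
      HasDerivAt (prim (fun w => Complex.exp (prim Nf w))) (Complex.exp (prim Nf z)) z :=
    fun z hz => prim_hasDerivAt hexpd hz
  -- q2 constant
  have hq2 : ∀ z ∈ ball (0:ℂ) 1,
      HasDerivAt (fun z => (fn z - fn 0) * (deriv fn 0)⁻¹
        - prim (fun w => Complex.exp (prim Nf w)) z) 0 z := by
    intro z hz
    have dfn : HasDerivAt fn (deriv fn z) z :=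
      (hd.differentiableAt (isOpen_ball.mem_nhds hz)).hasDerivAt
    have dgn : HasDerivAt (fun z => (fn z - fn 0) * (deriv fn 0)⁻¹)
        (deriv fn z * (deriv fn 0)⁻¹) z := (dfn.sub_const (fn 0)).mul_const _
    have hval : deriv fn z * (deriv fn 0)⁻¹ - Complex.exp (prim Nf z) = 0 := by
      rw [hf'_formula z hz]
      field_simp
      ring
    have := dgn.sub (hGn z hz)
    rwa [hval] at this
  intro z hz
  have := eq_of_hasDerivAt_zero (convex_ball (0:ℂ) 1) isOpen_ball hq2 hz h01
  simp only [prim_zero, sub_self, zero_mul, sub_zero] at this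
  linear_combination this
theorem stmt_7 (Φ : ℂ → ℂ)
    (hΦ : DifferentiableOn ℂ Φ (Metric.ball 0 1))
    (hΦb : ∃ M : ℝ, ∀ z ∈ Metric.ball (0:ℂ) 1, ‖Φ z‖ * (1 - ‖z‖^2) ≤ M)
    (f : ℕ → ℂ → ℂ)
    (hdiff : ∀ n, DifferentiableOn ℂ (f n) (Metric.ball 0 1))
    (hinj : ∀ n, Set.InjOn (f n) (Metric.ball 0 1))
    (hconv : ∀ ε > (0:ℝ), ∃ N : ℕ, ∀ n ≥ N, ∀ z ∈ Metric.ball (0:ℂ) 1,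
      ‖deriv (deriv (f n)) z / deriv (f n) z - Φ z‖ * (1 - ‖z‖^2) ≤ ε) :
    ∃ F : ℂ → ℂ, DifferentiableOn ℂ F (Metric.ball 0 1) ∧
      Set.InjOn F (Metric.ball 0 1) ∧
      ∀ z ∈ Metric.ball (0:ℂ) 1, deriv (deriv F) z / deriv F z = Φ z := by
  have hconv' : ∀ ε > (0:ℝ), ∃ N : ℕ, ∀ n ≥ N, ∀ z ∈ Metric.ball (0:ℂ) 1,
      ‖deriv (deriv (f n)) z / deriv (f n) z - Φ z‖ * (1 - ‖z‖^2) ≤ ε := by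
    exact hconv
  clear hconv hΦb
  have hΦc : ContinuousOn Φ (ball 0 1) := hΦ.continuousOn
  have h01 : (0:ℂ) ∈ ball (0:ℂ) 1 := mem_ball_self one_pos
  -- the limit function
  have hh : ∀ z ∈ ball (0:ℂ) 1, HasDerivAt (prim Φ) (Φ z) z :=
    fun z hz => prim_hasDerivAt hΦ hz
  have hhd : DifferentiableOn ℂ (prim Φ) (ball 0 1) :=
    fun z hz => ((hh z hz).differentiableAt).differentiableWithinAt
  have hexpd : DifferentiableOn ℂ (fun w => Complex.exp (prim Φ w)) (ball 0 1) := hhd.cexp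
  set F : ℂ → ℂ := prim (fun w => Complex.exp (prim Φ w)) with hF_def
  have hF : ∀ z ∈ ball (0:ℂ) 1, HasDerivAt F (Complex.exp (prim Φ z)) z :=
    fun z hz => prim_hasDerivAt hexpd hz
  have hFd : DifferentiableOn ℂ F (ball 0 1) :=
    fun z hz => ((hF z hz).differentiableAt).differentiableWithinAt
  have hFderiv : ∀ z ∈ ball (0:ℂ) 1, deriv F z = Complex.exp (prim Φ z) :=
    fun z hz => (hF z hz).deriv
  have hF'ne : ∀ z ∈ ball (0:ℂ) 1, deriv F z ≠ 0 := by
    intro z hz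
    rw [hFderiv z hz]
    exact Complex.exp_ne_zero _
  -- pre-Schwarzian of F equals Φ
  have hNF : ∀ z ∈ ball (0:ℂ) 1, deriv (deriv F) z / deriv F z = Φ z := by
    intro z hz
    have hev : deriv F =ᶠ[𝓝 z] (fun w => Complex.exp (prim Φ w)) :=
      Filter.eventuallyEq_of_mem (isOpen_ball.mem_nhds hz) (fun w hw => hFderiv w hw)
    have hd2 : HasDerivAt (fun w => Complex.exp (prim Φ w))
        (Complex.exp (prim Φ z) * Φ z) z :=
      (Complex.hasDerivAt_exp (prim Φ z)).comp z (hh z hz)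
    rw [hev.deriv_eq, hd2.deriv, hFderiv z hz]
    exact mul_div_cancel_left₀ _ (Complex.exp_ne_zero _)
  obtain ⟨N₁, hN₁⟩ := hconv' 1 one_pos
  refine ⟨F, hFd, ?_, hNF⟩
  -- injectivity via approximation
  apply injOn_limit F hFd hF'ne
  intro ε hε ρ0 hρ0
  set ρ : ℝ := max ρ0 0 with hρ_def
  have hρnn : 0 ≤ ρ := le_max_right _ _
  have hρ1 : ρ < 1 := max_lt hρ0 one_pos
  have hρsq : 0 < 1 - ρ^2 := by nlinarith
  have hρball : closedBall (0:ℂ) ρ ⊆ ball (0:ℂ) 1 := closedBall_subset_ball hρ1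
  obtain ⟨CΦ, hCΦ⟩ := (isCompact_closedBall (0:ℂ) ρ).exists_bound_of_continuousOn
    (hΦc.mono hρball)
  have hCΦ0 : 0 ≤ CΦ := le_trans (norm_nonneg _) (hCΦ 0 (mem_closedBall_self hρnn))
  have hMh : ∀ z : ℂ, ‖z‖ ≤ ρ → ‖prim Φ z‖ ≤ ρ * CΦ := by
    intro z hzρ
    have h1 : ‖prim Φ z‖ ≤ ‖z‖ * CΦ := by
      apply prim_norm_le
      intro t ht
      exact hCΦ _ (mem_closedBall_zero_iff.mpr (le_trans (mem_of_seg ht) hzρ))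
    exact le_trans h1 (mul_le_mul_of_nonneg_right hzρ hCΦ0)
  set A : ℝ := ρ/(1-ρ^2) with hA_def
  have hA0 : 0 ≤ A := by positivity
  set Bc : ℝ := 2*ρ*Real.exp (ρ*CΦ) with hBc_def
  have hBc0 : 0 ≤ Bc := by positivity
  set ε₀ : ℝ := min (1/(A+1)) (ε/((Bc+1)*(A+1))) with hε₀_def
  have hε₀pos : 0 < ε₀ := by
    simp only [hε₀_def, lt_min_iff]
    constructor <;> positivity
  have hAε₀ : A * ε₀ ≤ 1 := by
    have h1 : ε₀ ≤ 1/(A+1) := min_le_left _ _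
    have h2 : A * ε₀ ≤ A * (1/(A+1)) := mul_le_mul_of_nonneg_left h1 hA0
    have h3 : A * (1/(A+1)) ≤ 1 := by
      rw [mul_one_div, div_le_one (by positivity)]
      linarith
    linarith
  have hBAε₀ : Bc * (A * ε₀) ≤ ε := by
    have hden : (0:ℝ) < (Bc+1)*(A+1) := by positivity
    have h2 : ε₀ ≤ ε/((Bc+1)*(A+1)) := min_le_right _ _
    have h3 : Bc * (A * ε₀) ≤ Bc * A * (ε/((Bc+1)*(A+1))) := by
      rw [← mul_assoc]
      exact mul_le_mul_of_nonneg_left h2 (by positivity)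
    have h4 : Bc * A * (ε/((Bc+1)*(A+1))) ≤ ε := by
      rw [mul_div_assoc', div_le_iff₀ hden]
      nlinarith [hε.le]
    linarith
  obtain ⟨N₂, hN₂⟩ := hconv' ε₀ hε₀pos
  set n : ℕ := max N₁ N₂ with hn_def
  obtain ⟨hinj_g, hdiff_g, hNd, hgG⟩ := struct_lemma hΦc (hdiff n) (hinj n)
    (hN₁ n (le_max_left _ _))
  refine ⟨fun z => (f n z - f n 0) * (deriv (f n) 0)⁻¹, hdiff_g, hinj_g, ?_⟩
  intro z hzρ0
  have hzρ : ‖z‖ ≤ ρ := le_trans hzρ0 (le_max_left _ _)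
  have hz1 : ‖z‖ < 1 := lt_of_le_of_lt hzρ hρ1
  have hzb : z ∈ ball (0:ℂ) 1 := mem_ball_zero_iff.mpr hz1
  set Nf : ℂ → ℂ := fun w => deriv (deriv (f n)) w / deriv (f n) w with hNf_def
  -- step 1 : Nf close to Φ on closedBall ρ
  have e1 : ∀ w : ℂ, ‖w‖ ≤ ρ → ‖Nf w - Φ w‖ ≤ ε₀/(1-ρ^2) := by
    intro w hw
    have hwb : w ∈ ball (0:ℂ) 1 := mem_ball_zero_iff.mpr (lt_of_le_of_lt hw hρ1)
    have hb := hN₂ n (le_max_right _ _) w hwb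
    have h1w : 1 - ρ^2 ≤ 1 - ‖w‖^2 := by nlinarith [norm_nonneg w]
    rw [le_div_iff₀ hρsq]
    calc ‖Nf w - Φ w‖ * (1-ρ^2) ≤ ‖Nf w - Φ w‖ * (1-‖w‖^2) :=
          mul_le_mul_of_nonneg_left h1w (norm_nonneg _)
      _ ≤ ε₀ := hb
  -- step 2 : prim Nf close to prim Φ
  have e2 : ∀ w : ℂ, ‖w‖ ≤ ρ → ‖prim Nf w - prim Φ w‖ ≤ A * ε₀ := by
    intro w hw
    have hw1 : ‖w‖ < 1 := lt_of_le_of_lt hw hρ1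
    rw [prim_sub hNd.continuousOn hΦc hw1]
    have h1 : ‖prim (fun v => Nf v - Φ v) w‖ ≤ ‖w‖ * (ε₀/(1-ρ^2)) := by
      apply prim_norm_le
      intro t ht
      exact e1 _ (le_trans (mem_of_seg ht) hw)
    calc ‖prim (fun v => Nf v - Φ v) w‖ ≤ ‖w‖ * (ε₀/(1-ρ^2)) := h1
      _ ≤ ρ * (ε₀/(1-ρ^2)) := mul_le_mul_of_nonneg_right hw (by positivity)
      _ = A * ε₀ := by rw [hA_def]; ring
  -- step 3 : exponentials close
  have e3 : ∀ w : ℂ, ‖w‖ ≤ ρ →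
      ‖Complex.exp (prim Nf w) - Complex.exp (prim Φ w)‖
        ≤ Real.exp (ρ*CΦ) * (2*(A*ε₀)) := by
    intro w hw
    have hd1 : ‖prim Nf w - prim Φ w‖ ≤ A * ε₀ := e2 w hw
    have hsplit : Complex.exp (prim Nf w)
        = Complex.exp (prim Φ w) * Complex.exp (prim Nf w - prim Φ w) := by
      rw [← Complex.exp_add]
      ring_nf
    rw [hsplit, ← mul_sub_one, norm_mul]
    have hnorm1 : ‖Complex.exp (prim Φ w)‖ ≤ Real.exp (ρ*CΦ) := by
      rw [Complex.norm_exp]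
      apply Real.exp_le_exp.mpr
      exact le_trans (Complex.re_le_norm _) (hMh w hw)
    have hnorm2 : ‖Complex.exp (prim Nf w - prim Φ w) - 1‖ ≤ 2*(A*ε₀) := by
      calc ‖Complex.exp (prim Nf w - prim Φ w) - 1‖
          ≤ 2 * ‖prim Nf w - prim Φ w‖ := by
            apply Complex.norm_exp_sub_one_le
            linarith
        _ ≤ 2*(A*ε₀) := by
            linarith
    exact mul_le_mul hnorm1 hnorm2 (norm_nonneg _) (Real.exp_nonneg _)
  -- step 4 : conclusion
  have hexpNd : ContinuousOn (fun w => Complex.exp (prim Nf w)) (ball 0 1) := by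
    apply ContinuousOn.cexp
    intro w hw
    exact ((prim_hasDerivAt hNd hw).differentiableAt).differentiableWithinAt.continuousWithinAt
  have e4 : ‖prim (fun w => Complex.exp (prim Nf w)) z - F z‖ ≤ Bc * (A*ε₀) := by
    rw [hF_def, prim_sub hexpNd hexpd.continuousOn hz1]
    have h1 : ‖prim (fun v => Complex.exp (prim Nf v) - Complex.exp (prim Φ v)) z‖
        ≤ ‖z‖ * (Real.exp (ρ*CΦ) * (2*(A*ε₀))) := by
      apply prim_norm_le
      intro t ht
      exact e3 _ (le_trans (mem_of_seg ht) hzρ)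
    calc ‖prim (fun v => Complex.exp (prim Nf v) - Complex.exp (prim Φ v)) z‖
        ≤ ‖z‖ * (Real.exp (ρ*CΦ) * (2*(A*ε₀))) := h1
      _ ≤ ρ * (Real.exp (ρ*CΦ) * (2*(A*ε₀))) :=
          mul_le_mul_of_nonneg_right hzρ (by positivity)
      _ = Bc * (A*ε₀) := by rw [hBc_def]; ring
  show ‖(f n z - f n 0) * (deriv (f n) 0)⁻¹ - F z‖ ≤ ε
  rw [hgG z hzb]
  exact le_trans e4 hBAε₀
end

section
/- Let f, g be univalent functions on Δ with f(0)=g(0)=0, f'(0)=g'(0)=1. Suppose for some ε > 0 and r ∈ (0,1) that |N_g(z) - N_f(z)|(1-|z|²) < ε for all z with r < |z| < 1, where N_h = h''/h'. Set h = g ∘ f⁻¹ on f(Δ). Then there exist constants C₁, C₂ > 0 depending only on r, ε, f, g such that C₁((1-|z|)/(1+|z|))^{ε/2} ≤ |h'(f(z))| ≤ C₂((1+|z|)/(1-|z|))^{ε/2} for all z with r < |z| < 1. -/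
open Complex Filter Metric Set Topology


lemma deriv_ne_zero_of_injOn {U : Set ℂ} (hU : IsOpen U) {f : ℂ → ℂ}
    (hf : DifferentiableOn ℂ f U) (hinj : Set.InjOn f U) {z₀ : ℂ} (hz : z₀ ∈ U) :
    deriv f z₀ ≠ 0 := by
  intro hd
  have hA : AnalyticOnNhd ℂ f U := hf.analyticOnNhd hU
  set F : ℂ → ℂ := fun w => f w - f z₀ with hFdef
  have hFA : AnalyticAt ℂ F z₀ := (hA z₀ hz).sub analyticAt_const
  -- order is finite
  have hne_top : analyticOrderAt F z₀ ≠ ⊤ := by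
    intro htop
    rw [analyticOrderAt_eq_top] at htop
    obtain ⟨t, ht, htsub⟩ := Metric.mem_nhds_iff.mp
      (Filter.inter_mem htop (hU.mem_nhds hz))
    set s : ℝ := min t 1 with hs
    have hmin : 0 < s := lt_min ht one_pos
    set w : ℂ := z₀ + (s : ℂ) / 2 with hw
    have hwz : w ≠ z₀ := by
      simp only [hw, ne_eq, add_eq_left, div_eq_zero_iff]
      push_neg
      refine ⟨?_, by norm_num⟩
      exact_mod_cast ne_of_gt hmin
    have hwb : w ∈ ball z₀ t := by
      rw [mem_ball, dist_eq, hw]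
      simp only [add_sub_cancel_left]
      rw [norm_div, Complex.norm_real, Complex.norm_two, Real.norm_eq_abs, abs_of_pos hmin]
      calc s / 2 < s := by linarith
        _ ≤ t := min_le_left _ _
    obtain ⟨hFw, hwU⟩ := htsub hwb
    have : f w = f z₀ := by
      have h2 : f w - f z₀ = 0 := hFw
      exact sub_eq_zero.mp h2
    exact hwz (hinj hwU hz this)
  lift analyticOrderAt F z₀ to ℕ using hne_top with n hn
  have hFdef2 : F = fun w => f w - f z₀ := rfl
  obtain ⟨q, hqA, hq0, hev⟩ := (hFA.analyticOrderAt_eq_natCast (n := n)).mp hn.symm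
  -- n ≠ 0
  have hn0 : n ≠ 0 := by
    intro h0
    subst h0
    have h1 := hev.self_of_nhds
    simp only [pow_zero, one_smul] at h1
    have h2 : F z₀ = 0 := by simp [hFdef2]
    rw [h2] at h1
    exact hq0 h1.symm
  have hFdef2 : F = fun w => f w - f z₀ := rfl
  -- n ≠ 1
  have hn1 : n ≠ 1 := by
    intro h1
    subst h1
    have hdF : deriv F z₀ = 0 := by
      rw [hFdef2, deriv_sub_const, hd]
    have h2 : HasDerivAt (fun w => (w - z₀) ^ 1 • q w) (q z₀) z₀ := by
      have hq' : DifferentiableAt ℂ q z₀ := hqA.differentiableAt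
      have h3 : HasDerivAt (fun w : ℂ => (w - z₀) ^ 1) 1 z₀ := by
        simpa using ((hasDerivAt_id z₀).sub_const z₀)
      have := h3.mul hq'.hasDerivAt
      simp only [smul_eq_mul]
      refine this.congr_deriv ?_
      simp
    have h4 : deriv F z₀ = q z₀ := by
      rw [Filter.EventuallyEq.deriv_eq (hev : F =ᶠ[nhds z₀] _)]
      exact h2.deriv
    rw [hdF] at h4
    exact hq0 h4.symm
  have hn2 : 2 ≤ n := by omega
  -- nth root of q near z₀
  obtain ⟨c, hc⟩ := IsAlgClosed.exists_pow_nat_eq (q z₀) (n := n) (by omega)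
  have hcne : c ≠ 0 := by
    intro h; rw [h, zero_pow hn0] at hc; exact hq0 hc.symm
  set ψ : ℂ → ℂ := fun w => c * Complex.exp (Complex.log (q w / q z₀) / n) with hψdef
  have hψA : AnalyticAt ℂ ψ z₀ := by
    apply analyticAt_const.mul
    apply analyticAt_cexp.comp
    apply AnalyticAt.div _ analyticAt_const (by exact_mod_cast Nat.cast_ne_zero.mpr hn0)
    apply (analyticAt_clog ?_).comp (hqA.div analyticAt_const hq0)
    rw [Pi.div_apply, div_self hq0]
    exact Complex.one_mem_slitPlane
  have hψz : ψ z₀ = c := by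
    simp [hψdef, div_self hq0, Complex.log_one]
  -- ψ^n = q eventually
  have hqne : ∀ᶠ w in 𝓝 z₀, q w ≠ 0 :=
    hqA.continuousAt.eventually_ne hq0
  have hψn : ∀ᶠ w in 𝓝 z₀, ψ w ^ n = q w := by
    filter_upwards [hqne] with w hw
    have : Complex.exp (Complex.log (q w / q z₀) / n) ^ n
        = Complex.exp (Complex.log (q w / q z₀)) := by
      rw [← Complex.exp_nat_mul]
      congr 1
      rw [mul_comm, div_mul_cancel₀ _ (Nat.cast_ne_zero.mpr hn0 : (n:ℂ) ≠ 0)]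
    rw [hψdef]
    simp only [mul_pow, this, hc]
    rw [Complex.exp_log (div_ne_zero hw hq0)]
    field_simp
  set φ : ℂ → ℂ := fun w => (w - z₀) * ψ w with hφdef
  have hφA : AnalyticAt ℂ φ z₀ := ((analyticAt_id.sub analyticAt_const)).mul hψA
  have hφz : φ z₀ = 0 := by simp [hφdef]
  have hφd : HasDerivAt φ c z₀ := by
    have h3 : HasDerivAt (fun w : ℂ => w - z₀) 1 z₀ := (hasDerivAt_id z₀).sub_const z₀
    have := h3.mul hψA.differentiableAt.hasDerivAt
    exact this.congr_deriv (by simp [hψz])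
  -- φ is not locally constant
  have hnc : ¬ (∀ᶠ w in 𝓝 z₀, φ w = φ z₀) := by
    intro hcst
    have : deriv φ z₀ = 0 := by
      rw [Filter.EventuallyEq.deriv_eq hcst, deriv_const]
    rw [hφd.deriv] at this
    exact hcne this
  have hmap : 𝓝 (φ z₀) ≤ Filter.map φ (𝓝 z₀) :=
    (hφA.eventually_constant_or_nhds_le_map_nhds_aux).resolve_left hnc
  rw [hφz] at hmap
  -- F = φ^n eventually
  have hFφ : ∀ᶠ w in 𝓝 z₀, F w = φ w ^ n := by
    filter_upwards [hev, hψn] with w h1 h2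
    rw [h1, hφdef]
    simp only [smul_eq_mul, mul_pow, h2]
  obtain ⟨s, hsnhds, hs⟩ : ∃ s ∈ 𝓝 z₀, ∀ w ∈ s, (F w = φ w ^ n) ∧ w ∈ U := by
    have := hFφ.and (hU.mem_nhds hz : ∀ᶠ w in 𝓝 z₀, w ∈ U)
    exact ⟨_, this, fun w hw => hw⟩
  have himg : φ '' s ∈ 𝓝 (0 : ℂ) := by
    apply hmap
    rw [Filter.mem_map]
    exact Filter.mem_of_superset hsnhds (subset_preimage_image φ s)
  obtain ⟨ρ, hρ, hρsub⟩ := Metric.mem_nhds_iff.mp himg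
  set ζ : ℂ := Complex.exp (2 * Real.pi * Complex.I / n) with hζdef
  have hζn : ζ ^ n = 1 := by
    rw [hζdef, ← Complex.exp_nat_mul]
    rw [mul_div_cancel₀ _ (by exact_mod_cast Nat.cast_ne_zero.mpr hn0)]
    exact_mod_cast Complex.exp_two_pi_mul_I
  have hζ1 : ζ ≠ 1 := by
    intro h
    rw [hζdef, Complex.exp_eq_one_iff] at h
    obtain ⟨k, hk⟩ := h
    have h2 : (2 * (Real.pi : ℂ) * Complex.I) ≠ 0 := by
      simp [Real.pi_ne_zero, Complex.I_ne_zero]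
    have hncc : (n : ℂ) ≠ 0 := Nat.cast_ne_zero.mpr hn0
    have hkn : (k : ℂ) * n = 1 := by
      have h3 : 2 * (Real.pi : ℂ) * Complex.I * 1
          = 2 * (Real.pi : ℂ) * Complex.I * ((k : ℂ) * n) := by
        field_simp at hk
        ring_nf
        ring_nf at hk
        linear_combination (2 * (Real.pi:ℂ) * Complex.I) * hk
      exact (mul_left_cancel₀ h2 h3).symm
    have hknz : (k * (n : ℤ) : ℤ) = 1 := by exact_mod_cast hkn
    have : (n : ℤ) ≤ 1 := Int.le_of_dvd one_pos ⟨k, by linarith [hknz]⟩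
    omega
  have hζab : ‖ζ‖ = 1 := by
    rw [hζdef, Complex.norm_exp]
    have : (2 * (Real.pi : ℂ) * Complex.I / n).re = 0 := by
      rw [div_re]
      simp [Complex.mul_re, Complex.mul_im]
    rw [this, Real.exp_zero]
  set c₀ : ℂ := ((ρ / 2 : ℝ) : ℂ) with hc₀
  have hc₀ne : c₀ ≠ 0 := by
    simp only [hc₀, ne_eq, Complex.ofReal_eq_zero]
    positivity
  have hc₀mem : c₀ ∈ ball (0 : ℂ) ρ := by
    rw [mem_ball, dist_zero_right, hc₀, Complex.norm_real, Real.norm_eq_abs,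
      abs_of_pos (by positivity)]
    linarith
  have hc₀ζmem : c₀ * ζ ∈ ball (0 : ℂ) ρ := by
    rw [mem_ball, dist_zero_right, norm_mul]
    have : ‖ζ‖ = 1 := hζab
    rw [this, mul_one, hc₀, Complex.norm_real, Real.norm_eq_abs,
      abs_of_pos (by positivity)]
    linarith
  obtain ⟨w₁, hw₁s, hφw₁⟩ := hρsub hc₀mem
  obtain ⟨w₂, hw₂s, hφw₂⟩ := hρsub hc₀ζmem
  have hw12 : w₁ ≠ w₂ := by
    intro hEq
    rw [hEq, hφw₂] at hφw₁
    have : ζ = 1 := by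
      field_simp at hφw₁
      tauto
    exact hζ1 this
  have hFw₁ : F w₁ = c₀ ^ n := by rw [(hs w₁ hw₁s).1, hφw₁]
  have hFw₂ : F w₂ = c₀ ^ n := by
    rw [(hs w₂ hw₂s).1, hφw₂, mul_pow, hζn, mul_one]
  have hff : f w₁ = f w₂ := by
    have : F w₁ = F w₂ := by rw [hFw₁, hFw₂]
    simpa [hFdef2, sub_left_inj] using this
  exact hw12 (hinj (hs w₁ hw₁s).2 (hs w₂ hw₂s).2 hff)


lemma radial_est (u du : ℝ → ℂ) (ε a T : ℝ) (hε : 0 ≤ ε)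
    (ha : 0 < a) (haT : a ≤ T) (hT : T < 1)
    (hu : ∀ t ∈ Set.Icc a T, HasDerivAt u (du t) t)
    (hne : ∀ t ∈ Set.Icc a T, u t ≠ 0)
    (hb : ∀ t ∈ Set.Icc a T, ‖du t‖ ≤ ε / (1 - t^2) * ‖u t‖) :
    ‖u T‖ ≤ ‖u a‖ * ((1+T)/(1-T))^(ε/2) ∧ ‖u a‖ * ((1-T)/(1+T))^(ε/2) ≤ ‖u T‖ := by
  have hT1 : (0:ℝ) < 1 - T := by linarith
  have hT2 : (0:ℝ) < 1 + T := by linarith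
  set p : ℝ → ℝ := fun t => Complex.normSq (u t) with hpdef
  set L : ℝ → ℝ := fun t => Real.log (p t) with hLdef
  set M : ℝ → ℝ := fun t => ε * (Real.log (1+t) - Real.log (1-t)) with hMdef
  have hppos : ∀ t ∈ Set.Icc a T, 0 < p t := fun t ht =>
    Complex.normSq_pos.mpr (hne t ht)
  -- derivative of p
  have hp : ∀ t ∈ Set.Icc a T, HasDerivAt p
      (2 * ((u t).re * (du t).re + (u t).im * (du t).im)) t := by
    intro t ht
    have h1 : HasDerivAt (fun s => (u s).re) ((du t).re) t :=
      (Complex.reCLM.hasFDerivAt.comp_hasDerivAt t (hu t ht))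
    have h2 : HasDerivAt (fun s => (u s).im) ((du t).im) t :=
      (Complex.imCLM.hasFDerivAt.comp_hasDerivAt t (hu t ht))
    have h3 := (h1.mul h1).add (h2.mul h2)
    have : p = fun s => (u s).re * (u s).re + (u s).im * (u s).im := by
      funext s; simp [hpdef, Complex.normSq_apply]
    rw [this]
    refine h3.congr_deriv ?_
    ring
  have hL : ∀ t ∈ Set.Icc a T, HasDerivAt L
      (2 * ((u t).re * (du t).re + (u t).im * (du t).im) / p t) t := by
    intro t ht
    exact (hp t ht).log (ne_of_gt (hppos t ht))
  have hM : ∀ t ∈ Set.Icc a T, HasDerivAt M (2 * ε / (1 - t^2)) t := by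
    intro t ht
    have ht1 : (0:ℝ) < 1 + t := by cases ht; nlinarith
    have ht2 : (0:ℝ) < 1 - t := by cases ht; nlinarith
    have h1 : HasDerivAt (fun s : ℝ => Real.log (1+s)) (1/(1+t)) t := by
      have := ((hasDerivAt_id t).const_add 1).log (ne_of_gt ht1)
      simpa using this
    have h2 : HasDerivAt (fun s : ℝ => Real.log (1-s)) (-1/(1-t)) t := by
      have := ((hasDerivAt_id t).const_sub 1).log (ne_of_gt ht2)
      simpa using this
    have h3 := ((h1.sub h2).const_mul ε)
    have heq : 2 * ε / (1 - t^2) = ε * (1/(1+t) - -1/(1-t)) := by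
      have ht3 : (1 - t^2) ≠ 0 := by nlinarith
      field_simp
      ring
    rw [heq]
    exact h3
  -- bound on |L'|
  have hLbound : ∀ t ∈ Set.Icc a T,
      |2 * ((u t).re * (du t).re + (u t).im * (du t).im) / p t| ≤ 2 * ε / (1 - t^2) := by
    intro t ht
    have ht1 : (0:ℝ) < 1 + t := by cases ht; nlinarith
    have ht2 : (0:ℝ) < 1 - t := by cases ht; nlinarith
    have ht3 : (0:ℝ) < 1 - t^2 := by nlinarith
    have hup : (0:ℝ) < ‖u t‖ := by
      rw [norm_pos_iff]; exact hne t ht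
    have key : |(u t).re * (du t).re + (u t).im * (du t).im|
        ≤ ‖u t‖ * ‖du t‖ := by
      have : (u t).re * (du t).re + (u t).im * (du t).im
          = ((starRingEnd ℂ) (u t) * du t).re := by
        simp [Complex.mul_re]
      rw [this]
      calc |((starRingEnd ℂ) (u t) * du t).re| ≤ ‖(starRingEnd ℂ) (u t) * du t‖ :=
            Complex.abs_re_le_norm _
        _ = ‖u t‖ * ‖du t‖ := by
            rw [norm_mul, Complex.norm_conj]
    have hpabs : p t = ‖u t‖ ^ 2 := by
      rw [hpdef]; exact Complex.normSq_eq_norm_sq _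
    rw [abs_div, abs_of_pos (hppos t ht), abs_mul]
    rw [div_le_div_iff₀ (hppos t ht) ht3]
    have hb' := hb t ht
    have habs2 : |(2:ℝ)| = 2 := by norm_num
    rw [habs2, hpabs]
    have h5 : ‖du t‖ * (1 - t^2) ≤ ε * ‖u t‖ := by
      rw [div_mul_eq_mul_div, le_div_iff₀ ht3] at hb'
      linarith [hb']
    calc 2 * |(u t).re * (du t).re + (u t).im * (du t).im| * (1 - t^2)
        ≤ 2 * (‖u t‖ * ‖du t‖) * (1 - t^2) := by
          have := mul_le_mul_of_nonneg_left key (by norm_num : (0:ℝ) ≤ 2)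
          nlinarith [this]
      _ = 2 * ‖u t‖ * (‖du t‖ * (1 - t^2)) := by ring
      _ ≤ 2 * ‖u t‖ * (ε * ‖u t‖) := by
          apply mul_le_mul_of_nonneg_left h5
          positivity
      _ = 2 * ε * ‖u t‖ ^ 2 := by ring
  -- L - M is antitone, L + M is monotone on Icc a T
  have hconv : Convex ℝ (Set.Icc a T) := convex_Icc a T
  have hint : interior (Set.Icc a T) ⊆ Set.Icc a T := interior_subset
  have hLT : L T - M T ≤ L a - M a := by
    have hanti : AntitoneOn (fun t => L t - M t) (Set.Icc a T) := by
      apply antitoneOn_of_deriv_nonpos hconv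
      · exact ContinuousOn.sub
          (fun t ht => ((hL t ht).continuousAt.continuousWithinAt))
          (fun t ht => ((hM t ht).continuousAt.continuousWithinAt))
      · intro t ht
        exact ((hL t (hint ht)).sub (hM t (hint ht))).differentiableAt.differentiableWithinAt
      · intro t ht
        rw [show deriv (fun t => L t - M t) t = _ from ((hL t (hint ht)).sub (hM t (hint ht))).deriv]
        have := hLbound t (hint ht)
        have h2 := abs_le.mp this
        linarith [h2.1, h2.2]
    exact hanti (Set.left_mem_Icc.mpr haT) (Set.right_mem_Icc.mpr haT) haT
  have hGT : L a + M a ≤ L T + M T := by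
    have hmono : MonotoneOn (fun t => L t + M t) (Set.Icc a T) := by
      apply monotoneOn_of_deriv_nonneg hconv
      · exact ContinuousOn.add
          (fun t ht => ((hL t ht).continuousAt.continuousWithinAt))
          (fun t ht => ((hM t ht).continuousAt.continuousWithinAt))
      · intro t ht
        exact ((hL t (hint ht)).add (hM t (hint ht))).differentiableAt.differentiableWithinAt
      · intro t ht
        rw [show deriv (fun t => L t + M t) t = _ from ((hL t (hint ht)).add (hM t (hint ht))).deriv]
        have := hLbound t (hint ht)
        have h2 := abs_le.mp this
        linarith [h2.1, h2.2]
    exact hmono (Set.left_mem_Icc.mpr haT) (Set.right_mem_Icc.mpr haT) haT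
  -- M a ≥ 0
  have hMa : 0 ≤ M a := by
    have h1 : 0 ≤ Real.log (1+a) := Real.log_nonneg (by linarith)
    have h2 : Real.log (1-a) ≤ 0 := Real.log_nonpos (by linarith) (by linarith)
    show 0 ≤ ε * (Real.log (1 + a) - Real.log (1 - a))
    nlinarith
  have haMem : a ∈ Set.Icc a T := Set.left_mem_Icc.mpr haT
  have hTMem : T ∈ Set.Icc a T := Set.right_mem_Icc.mpr haT
  -- exp of M T
  have hexpMT : Real.exp (M T) = ((1+T)/(1-T)) ^ ε := by
    show Real.exp (ε * (Real.log (1 + T) - Real.log (1 - T))) = _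
    rw [Real.rpow_def_of_pos (by positivity)]
    rw [Real.log_div (ne_of_gt hT2) (ne_of_gt hT1)]
    ring_nf
  have hexpMT' : Real.exp (-(M T)) = ((1-T)/(1+T)) ^ ε := by
    show Real.exp (-(ε * (Real.log (1 + T) - Real.log (1 - T)))) = _
    rw [Real.rpow_def_of_pos (by positivity)]
    rw [Real.log_div (ne_of_gt hT1) (ne_of_gt hT2)]
    ring_nf
  have hpa : p a = ‖u a‖^2 := Complex.normSq_eq_norm_sq _
  have hpT : p T = ‖u T‖^2 := Complex.normSq_eq_norm_sq _
  have hua : (0:ℝ) < ‖u a‖ := norm_pos_iff.mpr (hne a haMem)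
  have huT : (0:ℝ) < ‖u T‖ := norm_pos_iff.mpr (hne T hTMem)
  constructor
  · -- upper bound
    have h1 : L T ≤ L a + M T := by linarith
    have h2 : p T ≤ p a * Real.exp (M T) := by
      have := Real.exp_le_exp.mpr h1
      rw [Real.exp_add] at this
      rw [hLdef] at this
      simp only at this
      rw [Real.exp_log (hppos T hTMem), Real.exp_log (hppos a haMem)] at this
      exact this
    rw [hpa, hpT, hexpMT] at h2
    have hrhs : ‖u a‖ * ((1+T)/(1-T))^(ε/2) > 0 := by positivity
    have h3 : ‖u T‖^2 ≤ (‖u a‖ * ((1+T)/(1-T))^(ε/2))^2 := by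
      rw [mul_pow]
      rw [← Real.rpow_natCast (((1+T)/(1-T))^(ε/2)) 2, ← Real.rpow_mul (by positivity)]
      norm_num
      convert h2 using 2
    nlinarith [h3, huT, hrhs]
  · -- lower bound
    have h1 : L a - M T ≤ L T := by linarith
    have h2 : p a * Real.exp (-(M T)) ≤ p T := by
      have := Real.exp_le_exp.mpr h1
      rw [show L a - M T = L a + (-(M T)) by ring, Real.exp_add] at this
      rw [hLdef] at this
      simp only at this
      rw [Real.exp_log (hppos T hTMem), Real.exp_log (hppos a haMem)] at this
      exact this
    rw [hpa, hpT, hexpMT'] at h2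
    have hlhs : ‖u a‖ * ((1-T)/(1+T))^(ε/2) > 0 := by positivity
    have h3 : (‖u a‖ * ((1-T)/(1+T))^(ε/2))^2 ≤ ‖u T‖^2 := by
      rw [mul_pow]
      rw [← Real.rpow_natCast (((1-T)/(1+T))^(ε/2)) 2, ← Real.rpow_mul (by positivity)]
      norm_num
      convert h2 using 2
    nlinarith [h3, huT, hlhs]

theorem stmt_10 (f g h : ℂ → ℂ)
    (hf : DifferentiableOn ℂ f (Metric.ball 0 1)) (hfinj : Set.InjOn f (Metric.ball 0 1))
    (hg : DifferentiableOn ℂ g (Metric.ball 0 1)) (hginj : Set.InjOn g (Metric.ball 0 1))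
    (hf0 : f 0 = 0) (hf0' : deriv f 0 = 1) (hg0 : g 0 = 0) (hg0' : deriv g 0 = 1)
    (ε r : ℝ) (hε : 0 < ε) (hr0 : 0 < r) (hr1 : r < 1)
    (hN : ∀ z : ℂ, r < ‖z‖ → ‖z‖ < 1 →
      ‖deriv (deriv g) z / deriv g z - deriv (deriv f) z / deriv f z‖ *
        (1 - ‖z‖^2) < ε)
    -- h = g ∘ f⁻¹ on f(Δ)
    (hh : DifferentiableOn ℂ h (f '' Metric.ball 0 1))
    (hhf : ∀ z ∈ Metric.ball (0:ℂ) 1, h (f z) = g z) :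
    ∃ C₁ C₂ : ℝ, 0 < C₁ ∧ 0 < C₂ ∧ ∀ z : ℂ, r < ‖z‖ → ‖z‖ < 1 →
      C₁ * ((1 - ‖z‖) / (1 + ‖z‖)) ^ (ε/2) ≤ ‖deriv h (f z)‖ ∧
      ‖deriv h (f z)‖ ≤ C₂ * ((1 + ‖z‖) / (1 - ‖z‖)) ^ (ε/2) := by
  have hball : IsOpen (Metric.ball (0:ℂ) 1) := Metric.isOpen_ball
  have hfA : AnalyticOnNhd ℂ f (Metric.ball 0 1) := hf.analyticOnNhd hball
  have hgA : AnalyticOnNhd ℂ g (Metric.ball 0 1) := hg.analyticOnNhd hball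
  have hf' : ∀ w ∈ Metric.ball (0:ℂ) 1, deriv f w ≠ 0 :=
    fun w hw => deriv_ne_zero_of_injOn hball hf hfinj hw
  have hg' : ∀ w ∈ Metric.ball (0:ℂ) 1, deriv g w ≠ 0 :=
    fun w hw => deriv_ne_zero_of_injOn hball hg hginj hw
  -- the image is open
  have himg : IsOpen (f '' Metric.ball 0 1) := by
    rcases hfA.is_constant_or_isOpen (convex_ball 0 1).isPreconnected with hconst | hopen
    · exfalso
      obtain ⟨w, hw⟩ := hconst
      have h1 : (0:ℂ) ∈ Metric.ball (0:ℂ) 1 := by simp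
      have h2 : (1/2:ℂ) ∈ Metric.ball (0:ℂ) 1 := by
        simp [Metric.mem_ball]
        norm_num
      have := hfinj h1 h2 (by rw [hw 0 h1, hw _ h2])
      norm_num at this
    · exact hopen _ subset_rfl hball
  -- the key function F = g'/f'
  set F : ℂ → ℂ := fun w => deriv g w / deriv f w with hFdef
  have hFne : ∀ w ∈ Metric.ball (0:ℂ) 1, F w ≠ 0 :=
    fun w hw => div_ne_zero (hg' w hw) (hf' w hw)
  -- deriv h (f z) = F z
  have hderiv : ∀ w ∈ Metric.ball (0:ℂ) 1, deriv h (f w) = F w := by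
    intro w hw
    have hfd : HasDerivAt f (deriv f w) w := (hfA w hw).differentiableAt.hasDerivAt
    have hhd : DifferentiableAt ℂ h (f w) :=
      hh.differentiableAt (himg.mem_nhds (mem_image_of_mem f hw))
    have hcomp : HasDerivAt (h ∘ f) (deriv h (f w) * deriv f w) w :=
      (hhd.hasDerivAt).comp w hfd
    have heq : g =ᶠ[𝓝 w] (h ∘ f) := by
      filter_upwards [hball.mem_nhds hw] with v hv
      exact (hhf v hv).symm
    have h2 : deriv g w = deriv h (f w) * deriv f w := by
      rw [heq.deriv_eq]
      exact hcomp.deriv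
    rw [hFdef]
    simp only []
    rw [h2, mul_div_assoc, div_self (hf' w hw), mul_one]
  -- derivative identity for F
  have hFderiv : ∀ w ∈ Metric.ball (0:ℂ) 1, HasDerivAt F
      ((deriv (deriv g) w / deriv g w - deriv (deriv f) w / deriv f w) * F w) w := by
    intro w hw
    have hg2 : HasDerivAt (deriv g) (deriv (deriv g) w) w :=
      ((hgA.deriv w hw).differentiableAt).hasDerivAt
    have hf2 : HasDerivAt (deriv f) (deriv (deriv f) w) w :=
      ((hfA.deriv w hw).differentiableAt).hasDerivAt
    have h3 := hg2.div hf2 (hf' w hw)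
    refine HasDerivAt.congr_deriv h3 ?_
    rw [hFdef]
    field_simp [hf' w hw, hg' w hw]
  -- compact annulus
  set a : ℝ := (1 + r)/2 with hadef
  have har : r < a := by rw [hadef]; linarith
  have ha0 : 0 < a := by rw [hadef]; linarith
  have ha1 : a < 1 := by rw [hadef]; linarith
  set K : Set ℂ := {w : ℂ | r ≤ ‖w‖ ∧ ‖w‖ ≤ a} with hKdef
  have hKsub : K ⊆ Metric.ball (0:ℂ) 1 := by
    intro w hw
    rw [Metric.mem_ball, dist_zero_right]
    exact lt_of_le_of_lt hw.2 ha1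
  have hKcomp : IsCompact K := by
    have : K = Metric.closedBall (0:ℂ) a ∩ {w : ℂ | r ≤ ‖w‖} := by
      ext w
      simp only [hKdef, Set.mem_setOf_eq, Set.mem_inter_iff, Metric.mem_closedBall,
        dist_zero_right]
      tauto
    rw [this]
    exact (isCompact_closedBall 0 a).inter_right
      (isClosed_le continuous_const continuous_norm)
  have hKne : K.Nonempty := by
    refine ⟨(a : ℂ), ?_, ?_⟩ <;>
      rw [Complex.norm_real, Real.norm_eq_abs, _root_.abs_of_pos ha0]
    exact le_of_lt har
  have hFcont : ContinuousOn (fun w => ‖F w‖) K := by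
    apply ContinuousOn.norm
    intro w hw
    exact ((hFderiv w (hKsub hw)).differentiableAt.continuousAt).continuousWithinAt
  obtain ⟨wmin, hwmin, hmin⟩ := hKcomp.exists_isMinOn hKne hFcont
  obtain ⟨wmax, hwmax, hmax⟩ := hKcomp.exists_isMaxOn hKne hFcont
  set m : ℝ := ‖F wmin‖ with hmdef
  set Mx : ℝ := ‖F wmax‖ with hMxdef
  have hm0 : 0 < m := norm_pos_iff.mpr (hFne wmin (hKsub hwmin))
  have hMx0 : 0 < Mx := norm_pos_iff.mpr (hFne wmax (hKsub hwmax))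
  refine ⟨m, Mx, hm0, hMx0, ?_⟩
  intro z hrz hz1
  set T : ℝ := ‖z‖ with hTdef
  have hT0 : 0 < T := lt_trans hr0 hrz
  have hzball : z ∈ Metric.ball (0:ℂ) 1 := by
    rw [Metric.mem_ball, dist_zero_right]; exact hz1
  rw [hderiv z hzball]
  have hbase1 : (0:ℝ) < (1 - T)/(1 + T) := by
    apply div_pos <;> linarith
  have hbase2 : (1:ℝ) ≤ (1 + T)/(1 - T) := by
    rw [le_div_iff₀ (by linarith)]
    linarith
  by_cases hcase : T ≤ a
  · -- compact case
    have hzK : z ∈ K := ⟨le_of_lt hrz, hcase⟩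
    have h1 : m ≤ ‖F z‖ := hmin hzK
    have h2 : ‖F z‖ ≤ Mx := hmax hzK
    constructor
    · calc m * ((1 - T)/(1 + T)) ^ (ε/2) ≤ m * 1 := by
            apply mul_le_mul_of_nonneg_left _ (le_of_lt hm0)
            apply Real.rpow_le_one (le_of_lt hbase1) _ (by positivity)
            rw [div_le_one (by linarith)]
            linarith
        _ = m := mul_one m
        _ ≤ ‖F z‖ := h1
    · calc ‖F z‖ ≤ Mx := h2
        _ = Mx * 1 := (mul_one Mx).symm
        _ ≤ Mx * ((1 + T)/(1 - T)) ^ (ε/2) := by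
            apply mul_le_mul_of_nonneg_left _ (le_of_lt hMx0)
            exact Real.one_le_rpow hbase2 (by positivity)
  · -- radial case
    push_neg at hcase
    set ω : ℂ := z / (T : ℂ) with hωdef
    have hTne : (T : ℂ) ≠ 0 := by
      simp only [ne_eq, Complex.ofReal_eq_zero]
      exact ne_of_gt hT0
    have hω1 : ‖ω‖ = 1 := by
      rw [hωdef, norm_div, Complex.norm_real, Real.norm_eq_abs, _root_.abs_of_pos hT0]
      exact div_self (ne_of_gt hT0)
    have hmem : ∀ t : ℝ, 0 ≤ t → ‖(t : ℂ) * ω‖ = t := by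
      intro t ht
      rw [norm_mul, hω1, mul_one, Complex.norm_real, Real.norm_eq_abs, _root_.abs_of_nonneg ht]
    set u : ℝ → ℂ := fun t => F ((t : ℂ) * ω) with hudef
    set du : ℝ → ℂ := fun t =>
      ((deriv (deriv g) ((t:ℂ)*ω) / deriv g ((t:ℂ)*ω)
        - deriv (deriv f) ((t:ℂ)*ω) / deriv f ((t:ℂ)*ω)) * F ((t:ℂ)*ω)) * ω with hdudef
    have hmem2 : ∀ t ∈ Set.Icc a T, (t:ℂ)*ω ∈ Metric.ball (0:ℂ) 1 ∧ r < ‖(t:ℂ)*ω‖ := by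
      intro t ht
      obtain ⟨ht1, ht2⟩ := ht
      have htpos : 0 ≤ t := le_trans (le_of_lt ha0) ht1
      constructor
      · rw [Metric.mem_ball, dist_zero_right, hmem t htpos]
        linarith
      · rw [hmem t htpos]; linarith
    have hu : ∀ t ∈ Set.Icc a T, HasDerivAt u (du t) t := by
      intro t ht
      have hw := (hmem2 t ht).1
      have hF := hFderiv _ hw
      have hinner : HasDerivAt (fun s : ℂ => s * ω) ω (t : ℂ) := by
        simpa using (hasDerivAt_id (t:ℂ)).mul_const ω
      have hcomp := (hF.comp (t:ℂ) hinner)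
      exact hcomp.comp_ofReal
    have hne : ∀ t ∈ Set.Icc a T, u t ≠ 0 :=
      fun t ht => hFne _ (hmem2 t ht).1
    have hb : ∀ t ∈ Set.Icc a T, ‖du t‖ ≤ ε / (1 - t^2) * ‖u t‖ := by
      intro t ht
      obtain ⟨ht1, ht2⟩ := ht
      have htpos : 0 ≤ t := le_trans (le_of_lt ha0) ht1
      have ht3 : (0:ℝ) < 1 - t^2 := by nlinarith [lt_of_le_of_lt ht2 hz1]
      have hnrm : ‖(t:ℂ)*ω‖ = t := hmem t htpos
      have hNt := hN ((t:ℂ)*ω) (by rw [hnrm]; linarith)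
        (by rw [hnrm]; nlinarith)
      rw [hnrm] at hNt
      have hNt2 : ‖deriv (deriv g) ((t:ℂ)*ω) / deriv g ((t:ℂ)*ω)
          - deriv (deriv f) ((t:ℂ)*ω) / deriv f ((t:ℂ)*ω)‖ ≤ ε / (1 - t^2) := by
        rw [le_div_iff₀ ht3]
        exact le_of_lt hNt
      have h9 : ‖du t‖ = ‖deriv (deriv g) ((t:ℂ)*ω) / deriv g ((t:ℂ)*ω)
          - deriv (deriv f) ((t:ℂ)*ω) / deriv f ((t:ℂ)*ω)‖ * ‖F ((t:ℂ)*ω)‖ := by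
        show ‖((deriv (deriv g) ((t:ℂ)*ω) / deriv g ((t:ℂ)*ω)
          - deriv (deriv f) ((t:ℂ)*ω) / deriv f ((t:ℂ)*ω)) * F ((t:ℂ)*ω)) * ω‖ = _
        rw [norm_mul, norm_mul, hω1, mul_one]
      rw [h9]
      exact mul_le_mul_of_nonneg_right hNt2 (norm_nonneg _)
    have hrad := radial_est u du ε a T (le_of_lt hε) ha0 (le_of_lt hcase)
      hz1 hu hne hb
    have huT : u T = F z := by
      show F ((T:ℂ)*ω) = F z
      congr 1
      rw [hωdef]
      field_simp
    have huaK : (a:ℂ)*ω ∈ K := by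
      have hnga := hmem a (le_of_lt ha0)
      exact ⟨by rw [hnga]; exact le_of_lt har, by rw [hnga]⟩
    have hua1 : m ≤ ‖u a‖ := hmin huaK
    have hua2 : ‖u a‖ ≤ Mx := hmax huaK
    rw [huT] at hrad
    constructor
    · calc m * ((1 - T)/(1 + T)) ^ (ε/2)
          ≤ ‖u a‖ * ((1 - T)/(1 + T)) ^ (ε/2) := by
            apply mul_le_mul_of_nonneg_right hua1 (by positivity)
        _ ≤ ‖F z‖ := hrad.2
    · calc ‖F z‖ ≤ ‖u a‖ * ((1 + T)/(1 - T)) ^ (ε/2) := hrad.1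
        _ ≤ Mx * ((1 + T)/(1 - T)) ^ (ε/2) := by
            apply mul_le_mul_of_nonneg_right hua2 (by positivity)
end

section
/- Fix n ∈ ℕ, n ≥ 1. For rₙ ∈ (0,1), D > 0, and a continuous positive function φ on [0,2π] with ∫₀^{2π} φ(θ)^{t₁} dθ ≥ D (t₁ > 0 fixed), at least one of the following holds: (a) ∫_{E} φ^{t₁} dθ ≥ D/2 where E = {θ : φ(θ)^{t₁} > D/(2π)}, and then ∫₀^{2π} φ^{t₁+s} dθ ≥ (1/2)(2π)^{-s/t₁} D^{1+s/t₁} for every s > 0; or (b) ∫_{F} φ^{t₁} dθ ≥ D/2 where F is the complement of E in [0,2π), and then ∫_{H} φ^{t₁} dθ ≥ (7/16)D where H = {θ : D/(32π) < φ(θ)^{t₁} ≤ D/(2π)}, and consequently ∫₀^{2π} φ^{t₁+s} dθ ≥ (7/16)(32π)^{-s/t₁} D^{1+s/t₁} for every s > 0. -/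
open Real MeasureTheory

theorem stmt_15 (n : ℕ) (hn : 1 ≤ n) (rₙ : ℝ) (hrₙ : rₙ ∈ Set.Ioo (0:ℝ) 1)
    (t₁ D : ℝ) (ht₁ : 0 < t₁) (hD : 0 < D)
    (φ : ℝ → ℝ) (hφc : ContinuousOn φ (Set.Icc 0 (2*π)))
    (hφp : ∀ θ ∈ Set.Icc (0:ℝ) (2*π), 0 < φ θ)
    (hint : D ≤ ∫ θ in (0:ℝ)..(2*π), φ θ ^ t₁) :
    ((D/2 ≤ ∫ θ in {θ : ℝ | θ ∈ Set.Ico (0:ℝ) (2*π) ∧ D/(2*π) < φ θ ^ t₁}, φ θ ^ t₁) ∧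
      ∀ s > (0:ℝ),
        (1/2) * (2*π) ^ (-(s/t₁)) * D ^ (1 + s/t₁) ≤ ∫ θ in (0:ℝ)..(2*π), φ θ ^ (t₁ + s)) ∨
    ((D/2 ≤ ∫ θ in {θ : ℝ | θ ∈ Set.Ico (0:ℝ) (2*π) ∧ φ θ ^ t₁ ≤ D/(2*π)}, φ θ ^ t₁) ∧
      ((7/16) * D ≤ ∫ θ in {θ : ℝ | θ ∈ Set.Ico (0:ℝ) (2*π) ∧
          D/(32*π) < φ θ ^ t₁ ∧ φ θ ^ t₁ ≤ D/(2*π)}, φ θ ^ t₁) ∧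
      ∀ s > (0:ℝ),
        (7/16) * (32*π) ^ (-(s/t₁)) * D ^ (1 + s/t₁) ≤ ∫ θ in (0:ℝ)..(2*π), φ θ ^ (t₁ + s)) := by
  have hπ : (0:ℝ) < π := Real.pi_pos
  have h2π : (0:ℝ) < 2*π := by positivity
  have h32π : (0:ℝ) < 32*π := by positivity
  have hIcoIcc : Set.Ico (0:ℝ) (2*π) ⊆ Set.Icc 0 (2*π) := Set.Ico_subset_Icc_self
  -- continuity / integrability of φ ^ t₁
  have hψc : ContinuousOn (fun θ => φ θ ^ t₁) (Set.Icc 0 (2*π)) :=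
    hφc.rpow_const (fun x hx => Or.inl (hφp x hx).ne')
  have hIntψ : IntegrableOn (fun θ => φ θ ^ t₁) (Set.Icc 0 (2*π)) volume :=
    hψc.integrableOn_Icc
  have hIntψI : IntegrableOn (fun θ => φ θ ^ t₁) (Set.Ico 0 (2*π)) volume :=
    hIntψ.mono_set hIcoIcc
  -- the interval integral equals the integral over Ico
  have hIcoInt : ∀ g : ℝ → ℝ, (∫ θ in (0:ℝ)..(2*π), g θ) = ∫ θ in Set.Ico (0:ℝ) (2*π), g θ := by
    intro g
    rw [intervalIntegral.integral_of_le h2π.le, integral_Ioc_eq_integral_Ioo,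
      ← integral_Ico_eq_integral_Ioo]
  have hintIco : D ≤ ∫ θ in Set.Ico (0:ℝ) (2*π), φ θ ^ t₁ := by
    rwa [hIcoInt] at hint
  -- measurability of sublevel-type sets
  have hcl : ∀ c : ℝ, IsClosed (Set.Icc (0:ℝ) (2*π) ∩ (fun θ => φ θ ^ t₁) ⁻¹' Set.Iic c) :=
    fun c => hψc.preimage_isClosed_of_isClosed isClosed_Icc isClosed_Iic
  have hsub : ∀ c : ℝ, {θ : ℝ | θ ∈ Set.Ico (0:ℝ) (2*π) ∧ φ θ ^ t₁ ≤ c} =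
      Set.Ico (0:ℝ) (2*π) ∩ (Set.Icc (0:ℝ) (2*π) ∩ (fun θ => φ θ ^ t₁) ⁻¹' Set.Iic c) := by
    intro c
    ext θ
    simp only [Set.mem_setOf_eq, Set.mem_inter_iff, Set.mem_preimage, Set.mem_Iic]
    constructor
    · rintro ⟨h1, h2⟩; exact ⟨h1, hIcoIcc h1, h2⟩
    · rintro ⟨h1, _, h2⟩; exact ⟨h1, h2⟩
  have hmeas : ∀ c : ℝ, MeasurableSet {θ : ℝ | θ ∈ Set.Ico (0:ℝ) (2*π) ∧ φ θ ^ t₁ ≤ c} := by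
    intro c
    rw [hsub c]
    exact measurableSet_Ico.inter (hcl c).measurableSet
  -- set F (the "small" set) and E (the "large" set)
  set Fs : Set ℝ := {θ : ℝ | θ ∈ Set.Ico (0:ℝ) (2*π) ∧ φ θ ^ t₁ ≤ D/(2*π)} with hFs
  set Es : Set ℝ := {θ : ℝ | θ ∈ Set.Ico (0:ℝ) (2*π) ∧ D/(2*π) < φ θ ^ t₁} with hEs
  have hFmeas : MeasurableSet Fs := hmeas _
  have hFsub : Fs ⊆ Set.Ico (0:ℝ) (2*π) := fun θ hθ => hθ.1
  have hEeq : Es = Set.Ico (0:ℝ) (2*π) \ Fs := by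
    ext θ
    simp only [hEs, hFs, Set.mem_setOf_eq, Set.mem_diff, not_and, not_le]
    constructor
    · rintro ⟨h1, h2⟩; exact ⟨h1, fun _ => h2⟩
    · rintro ⟨h1, h2⟩; exact ⟨h1, h2 h1⟩
  have hEmeas : MeasurableSet Es := by
    rw [hEeq]; exact measurableSet_Ico.diff hFmeas
  have hEsub : Es ⊆ Set.Ico (0:ℝ) (2*π) := fun θ hθ => hθ.1
  have hsplit : (∫ θ in Es, φ θ ^ t₁) =
      (∫ θ in Set.Ico (0:ℝ) (2*π), φ θ ^ t₁) - ∫ θ in Fs, φ θ ^ t₁ := by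
    rw [hEeq]
    exact integral_diff hFmeas hIntψI hFsub
  -- the key lemma producing the bound for any s > 0
  have key : ∀ (A : Set ℝ) (c K : ℝ), MeasurableSet A → A ⊆ Set.Ico (0:ℝ) (2*π) → 0 < c →
      0 ≤ K → (∀ θ ∈ A, c ≤ φ θ ^ t₁) → (K ≤ ∫ θ in A, φ θ ^ t₁) →
      ∀ s, 0 < s → c ^ (s/t₁) * K ≤ ∫ θ in (0:ℝ)..(2*π), φ θ ^ (t₁ + s) := by
    intro A c K hA hAsub hc hK hlow hKint s hs
    have hcont2 : ContinuousOn (fun θ => φ θ ^ (t₁ + s)) (Set.Icc 0 (2*π)) :=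
      hφc.rpow_const (fun x hx => Or.inl (hφp x hx).ne')
    have hInt2 : IntegrableOn (fun θ => φ θ ^ (t₁ + s)) (Set.Ico 0 (2*π)) volume :=
      hcont2.integrableOn_Icc.mono_set hIcoIcc
    have hpt : ∀ θ ∈ A, c ^ (s/t₁) * (φ θ ^ t₁) ≤ φ θ ^ (t₁ + s) := by
      intro θ hθ
      have hφθ : 0 < φ θ := hφp θ (hIcoIcc (hAsub hθ))
      have hmul : t₁ * (s/t₁) = s := by field_simp
      have h1 : φ θ ^ (t₁ + s) = (φ θ ^ t₁) * (φ θ ^ s) := Real.rpow_add hφθ _ _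
      have h2 : φ θ ^ s = (φ θ ^ t₁) ^ (s/t₁) := by
        rw [← Real.rpow_mul hφθ.le, hmul]
      have h3 : c ^ (s/t₁) ≤ (φ θ ^ t₁) ^ (s/t₁) :=
        Real.rpow_le_rpow hc.le (hlow θ hθ) (by positivity)
      calc c ^ (s/t₁) * (φ θ ^ t₁) ≤ (φ θ ^ t₁) ^ (s/t₁) * (φ θ ^ t₁) :=
            mul_le_mul_of_nonneg_right h3 (Real.rpow_nonneg hφθ.le _)
        _ = φ θ ^ (t₁ + s) := by rw [h1, h2]; ring
    calc c ^ (s/t₁) * K ≤ c ^ (s/t₁) * ∫ θ in A, φ θ ^ t₁ :=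
          mul_le_mul_of_nonneg_left hKint (Real.rpow_nonneg hc.le _)
      _ = ∫ θ in A, c ^ (s/t₁) * (φ θ ^ t₁) := (integral_const_mul _ _).symm
      _ ≤ ∫ θ in A, φ θ ^ (t₁ + s) :=
          setIntegral_mono_on ((hIntψ.mono_set (hAsub.trans hIcoIcc)).const_mul _)
            (hInt2.mono_set hAsub) hA hpt
      _ ≤ ∫ θ in Set.Ico (0:ℝ) (2*π), φ θ ^ (t₁ + s) := by
          refine setIntegral_mono_set hInt2 ?_ (HasSubset.Subset.eventuallyLE hAsub)
          refine (ae_restrict_iff' measurableSet_Ico).mpr (Filter.Eventually.of_forall ?_)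
          intro θ hθ
          exact (Real.rpow_pos_of_pos (hφp θ (hIcoIcc hθ)) _).le
      _ = ∫ θ in (0:ℝ)..(2*π), φ θ ^ (t₁ + s) := (hIcoInt _).symm
  by_cases hcase : D/2 ≤ ∫ θ in Es, φ θ ^ t₁
  · left
    refine ⟨hcase, fun s hs => ?_⟩
    have hlow : ∀ θ ∈ Es, D/(2*π) ≤ φ θ ^ t₁ := fun θ hθ => hθ.2.le
    have := key Es (D/(2*π)) (D/2) hEmeas hEsub (by positivity) (by positivity) hlow hcase s hs
    refine le_trans (le_of_eq ?_) this
    have hne : ((2*π:ℝ) ^ (s/t₁)) ≠ 0 := (Real.rpow_pos_of_pos h2π _).ne'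
    rw [Real.rpow_neg h2π.le, Real.rpow_add hD, Real.rpow_one, Real.div_rpow hD.le h2π.le]
    field_simp
  · right
    push_neg at hcase
    have hFbig : D/2 ≤ ∫ θ in Fs, φ θ ^ t₁ := by
      have := hsplit
      linarith
    -- the set G where φ^t₁ is very small
    set Gs : Set ℝ := {θ : ℝ | θ ∈ Set.Ico (0:ℝ) (2*π) ∧ φ θ ^ t₁ ≤ D/(32*π)} with hGs
    have hGmeas : MeasurableSet Gs := hmeas _
    have hGsubF : Gs ⊆ Fs := by
      intro θ hθ
      refine ⟨hθ.1, hθ.2.trans ?_⟩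
      rw [div_le_div_iff₀ h32π h2π]
      nlinarith [hD.le, hπ.le]
    set Hs : Set ℝ := {θ : ℝ | θ ∈ Set.Ico (0:ℝ) (2*π) ∧
      D/(32*π) < φ θ ^ t₁ ∧ φ θ ^ t₁ ≤ D/(2*π)} with hHs
    have hHeq : Hs = Fs \ Gs := by
      ext θ
      simp only [hHs, hFs, hGs, Set.mem_setOf_eq, Set.mem_diff, not_and, not_le]
      constructor
      · rintro ⟨h1, h2, h3⟩; exact ⟨⟨h1, h3⟩, fun _ => h2⟩
      · rintro ⟨⟨h1, h3⟩, h2⟩; exact ⟨h1, h2 h1, h3⟩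
    have hHmeas : MeasurableSet Hs := by rw [hHeq]; exact hFmeas.diff hGmeas
    have hHsub : Hs ⊆ Set.Ico (0:ℝ) (2*π) := fun θ hθ => hθ.1
    -- bound the integral over G
    have hGsmall : (∫ θ in Gs, φ θ ^ t₁) ≤ D/16 := by
      have hGfin : volume Gs < ⊤ :=
        lt_of_le_of_lt (measure_mono (hGsubF.trans hFsub) :
            volume Gs ≤ volume (Set.Ico (0:ℝ) (2*π)))
          (by rw [Real.volume_Ico]; exact ENNReal.ofReal_lt_top)
      have h1 : (∫ θ in Gs, φ θ ^ t₁) ≤ ∫ _ in Gs, D/(32*π) :=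
        setIntegral_mono_on (hIntψ.mono_set ((hGsubF.trans hFsub).trans hIcoIcc))
          ((integrableOn_const_iff (C := D/(32*π))).mpr (Or.inr hGfin)) hGmeas (fun θ hθ => hθ.2)
      have h2 : (∫ _ in Gs, D/(32*π)) = (volume Gs).toReal * (D/(32*π)) := by
        rw [setIntegral_const]; simp [smul_eq_mul, measureReal_def]
      have hvol : (volume Gs).toReal ≤ 2*π := by
        have hm : volume Gs ≤ volume (Set.Ico (0:ℝ) (2*π)) := measure_mono (hGsubF.trans hFsub)
        rw [Real.volume_Ico, sub_zero] at hm
        calc (volume Gs).toReal ≤ (ENNReal.ofReal (2*π)).toReal :=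
              ENNReal.toReal_mono ENNReal.ofReal_ne_top hm
          _ = 2*π := ENNReal.toReal_ofReal h2π.le
      have h3 : (volume Gs).toReal * (D/(32*π)) ≤ (2*π) * (D/(32*π)) :=
        mul_le_mul_of_nonneg_right hvol (by positivity)
      have h4 : (2*π) * (D/(32*π)) = D/16 := by field_simp; ring
      linarith [h1, h2 ▸ h1]
    have hHbig : (7/16) * D ≤ ∫ θ in Hs, φ θ ^ t₁ := by
      have := integral_diff hGmeas (hIntψI.mono_set hFsub) hGsubF
      rw [← hHeq] at this
      rw [this]
      linarith
    refine ⟨hFbig, hHbig, fun s hs => ?_⟩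
    have hlow : ∀ θ ∈ Hs, D/(32*π) ≤ φ θ ^ t₁ := fun θ hθ => hθ.2.1.le
    have := key Hs (D/(32*π)) ((7/16)*D) hHmeas hHsub (by positivity) (by positivity)
      hlow hHbig s hs
    refine le_trans (le_of_eq ?_) this
    have hne : ((32*π:ℝ) ^ (s/t₁)) ≠ 0 := (Real.rpow_pos_of_pos h32π _).ne'
    rw [Real.rpow_neg h32π.le, Real.rpow_add hD, Real.rpow_one, Real.div_rpow hD.le h32π.le]
    field_simp
end
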